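/- arXiv:1801.09179 — 12 statements merged into one kernel-verified Lean document; each statement's English description precedes it below -/
import Mathlib

section
/- Let κ be an infinite cardinal and let λ = (2^κ)⁺. Then every abelian group G of cardinality λ satisfies G → (κ×2)^{FS_matrix}_κ: for every colouring c : G → C with |C| ≤ κ, there exists a family (x_{α,i} | α < κ, i < 2) of pairwise distinct elements of G such that c takes a single constant value on the set {x_{α,0} | α < κ} ∪ {x_{α,1} | α < κ} ∪ {x_{α,0} + x_{β,1} | α, β < κ}. -/
/-!
Fix `w ∈ G` and build greedily a sequence `(e_i)_{i < κ⁺}`: `e_i` is any element different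
from the earlier ones with `c (e_i - e_j) = c (w - e_j)` for all `j < i`; this set contains `w`
as long as `w` has not occurred. If every `w` occurred, at some stage `L w`, then `w` would be
determined by `L w` and the colours `c (w - e_j)`, `j < L w`, which leaves only `2^κ`
possibilities. So some sequence is injective, and the colour of `e_i - e_j` (`j < i`) depends
only on `j`; by pigeonhole it is a constant `γ` on a set of `κ⁺` indices. Splitting that set at
its `κ`-th element `t`, the elements `e_p - e_t` (`p > t`) and `e_t - e_q` (`q < t`) and their
sums `e_p - e_q` all have colour `γ`.
-/

universe u

open Cardinal Set Function

namespace FSMatrix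

section GreedySeq

variable {G C I : Type*} [AddCommGroup G] [LinearOrder I] [WellFoundedLT I] (c : G → C)

def greedyCandidates (w : G) (i : I) (prev : ∀ j, j < i → G) : Set G :=
  {x | ∀ j (h : j < i), x ≠ prev j h ∧ c (x - prev j h) = c (w - prev j h)}

noncomputable def greedySeq (w : G) : I → G :=
  wellFounded_lt.fix fun i prev => Classical.epsilon (· ∈ greedyCandidates c w i prev)

theorem greedySeq_eq (w : G) (i : I) :
    greedySeq c w i =
      Classical.epsilon (· ∈ greedyCandidates c w i fun j _ => greedySeq c w j) :=
  wellFounded_lt.fix_eq _ i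

variable {c}

theorem greedySeq_mem_greedyCandidates {w : G} {i : I} (hw : ∀ j < i, greedySeq c w j ≠ w) :
    greedySeq c w i ∈ greedyCandidates c w i fun j _ => greedySeq c w j := by
  rw [greedySeq_eq]
  exact Classical.epsilon_spec ⟨w, fun j hj => ⟨(hw j hj).symm, rfl⟩⟩

theorem greedySeq_injective {w : G} (hw : ∀ i : I, greedySeq c w i ≠ w) :
    Injective (greedySeq c w : I → G) :=
  .of_lt_imp_ne fun j _ h => ((greedySeq_mem_greedyCandidates fun k _ => hw k) j h).1.symm

theorem map_greedySeq_sub {w : G} (hw : ∀ i : I, greedySeq c w i ≠ w) {i j : I} (h : j < i) :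
    c (greedySeq c w i - greedySeq c w j) = c (w - greedySeq c w j) :=
  ((greedySeq_mem_greedyCandidates fun k _ => hw k) j h).2

-- `epsilon` depends only on the candidate set, so the sequences of `w` and `w'` agree as long as
-- their traces `c (w - e_j)` do.
theorem greedySeq_eq_of_forall_lt {w w' : G} {l : I}
    (h : ∀ j < l, c (w - greedySeq c w j) = c (w' - greedySeq c w' j)) :
    ∀ i ≤ l, greedySeq c w i = greedySeq c w' i := by
  intro i
  induction i using WellFoundedLT.induction with
  | ind i ih =>
    intro hi
    have hcand : (greedyCandidates c w i fun j _ => greedySeq c w j) =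
        greedyCandidates c w' i fun j _ => greedySeq c w' j := by
      ext x
      refine forall₂_congr fun j hj => ?_
      beta_reduce
      rw [h j (hj.trans_le hi), ih j hj (hj.le.trans hi)]
    rw [greedySeq_eq c w i, greedySeq_eq c w' i, hcand]

end GreedySeq

theorem exists_forall_greedySeq_ne {G C I : Type u} [AddCommGroup G] [LinearOrder I]
    [WellFoundedLT I] (c : G → C) {κ : Cardinal.{u}} (hκ : ℵ₀ ≤ κ) (hC : #C ≤ κ)
    (hI : #I ≤ 2 ^ κ) (hIio : ∀ i : I, #(Iio i) ≤ κ) (hG : 2 ^ κ < #G) :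
    ∃ w : G, ∀ i : I, greedySeq c w i ≠ w := by
  by_contra! hcon
  choose L hL using hcon
  let trace : G → Σ i : I, (Iio i → C) :=
    fun w => ⟨L w, fun j => c (w - greedySeq c w j.1)⟩
  have htrace : Injective trace := by
    intro w w' h
    obtain ⟨hLw, htr⟩ := Sigma.mk.inj_iff.mp h
    have hcol : ∀ j < L w, c (w - greedySeq c w j) = c (w' - greedySeq c w' j) := by
      intro j hj
      have hj' : (⟨j, hj⟩ : Iio (L w)) ≍ (⟨j, hLw ▸ hj⟩ : Iio (L w')) :=
        (Subtype.heq_iff_coe_eq fun k => by rw [hLw]).mpr rfl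
      have := congr_heq htr hj'
      exact this
    rw [← hL w, ← hL w', greedySeq_eq_of_forall_lt hcol _ le_rfl, hLw]
  have hbound : #(Σ i : I, (Iio i → C)) ≤ 2 ^ κ :=
    calc #(Σ i : I, (Iio i → C))
        ≤ sum fun _ : I => 2 ^ κ := by
          rw [mk_sigma]
          refine sum_le_sum _ _ fun i => ?_
          rw [← power_def, ← power_self_eq hκ]
          exact (power_le_power_right hC).trans
            (power_le_power_left (aleph0_pos.trans_le hκ).ne' (hIio i))
      _ = #I * 2 ^ κ := sum_const' _ _
      _ ≤ 2 ^ κ := mul_le_of_le (hκ.trans (cantor κ).le) hI le_rfl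
  exact (mk_le_of_injective htrace |>.trans hbound).not_gt hG

theorem exists_le_card_Iio_lt_card_Ioi {X : Type u} [LinearOrder X] [WellFoundedLT X]
    {κ : Cardinal.{u}} (hκ : ℵ₀ ≤ κ) (hX : κ < #X) :
    ∃ t : X, κ ≤ #(Iio t) ∧ κ < #(Ioi t) := by
  have hκX := (ord_lt_ord.mpr hX).trans_le (ord_le_type (α := X) (· < ·))
  obtain ⟨t, ht⟩ := Ordinal.typein_surj (α := X) (· < ·) hκX
  have hIio : #(Iio t) = κ := by
    have := Ordinal.card_typein (α := X) (r := (· < ·)) t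
    rw [ht, card_ord] at this
    exact this.symm
  refine ⟨t, hIio.ge, lt_of_not_ge fun hIoi => hX.not_ge ?_⟩
  calc #X = #(Iio t ∪ insert t (Ioi t) : Set X) := by rw [Ioi_insert, Iio_union_Ici, mk_univ]
    _ ≤ #(Iio t) + (#(Ioi t) + 1) := (mk_union_le _ _).trans (by gcongr; exact mk_insert_le)
    _ ≤ κ := add_le_of_le hκ hIio.le (add_le_of_le hκ hIoi (one_le_aleph0.trans hκ))

theorem injective_vecCons_pair {K G : Type*} {a b : K → G} (ha : Injective a)
    (hb : Injective b) (hab : ∀ α β, a α ≠ b β) :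
    Injective fun p : K × Fin 2 => ![a p.1, b p.1] p.2 := by
  rintro ⟨α, i⟩ ⟨β, j⟩ h
  fin_cases i <;> fin_cases j
  · exact Prod.ext (ha h) rfl
  · exact (hab _ _ h).elim
  · exact (hab _ _ h.symm).elim
  · exact Prod.ext (hb h) rfl

theorem exists_fsMatrix_of_map_sub_eq {G : Type u} {C : Type*} [AddCommGroup G] (c : G → C)
    {X K : Type u} [LinearOrder X] [WellFoundedLT X] {κ : Cardinal.{u}} (hκ : ℵ₀ ≤ κ)
    (hX : κ < #X) (hK : #K = κ) {e : X → G} (he : Injective e) {γ : C}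
    (hγ : ∀ x y, x < y → c (e y - e x) = γ) :
    ∃ x : K → Fin 2 → G,
      Injective (fun p : K × Fin 2 => x p.1 p.2) ∧
      ∃ δ : C, ∀ z ∈ (Set.range fun α => x α 0) ∪ (Set.range fun α => x α 1) ∪
          {z | ∃ α β, z = x α 0 + x β 1}, c z = δ := by
  obtain ⟨t, hlo, hhi⟩ := exists_le_card_Iio_lt_card_Ioi hκ hX
  obtain ⟨q⟩ : Nonempty (K ↪ Iio t) := by rw [← le_def, hK]; exact hlo
  -- `p` avoids these, so that no `e p - e t` equals some `e t - e q`
  set bad : Set X := {y | ∃ β, e y = e t + e t - e (q β)}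
  have hbad : #bad ≤ κ := by
    rw [← mk_image_eq he, ← hK]
    refine (mk_le_mk_of_subset ?_).trans (mk_range_le (f := fun β => e t + e t - e (q β)))
    rintro _ ⟨y, ⟨β, hβ⟩, rfl⟩
    exact ⟨β, hβ.symm⟩
  obtain ⟨p⟩ : Nonempty (K ↪ (Ioi t \ bad : Set X)) := by
    rw [← le_def, hK]
    exact le_of_lt <| lt_of_not_ge fun h =>
      hhi.not_ge ((le_mk_sdiff_add_mk _ bad).trans (add_le_of_le hκ h hbad))
  let a : K → G := fun α => e (p α) - e t
  let b : K → G := fun α => e t - e (q α)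
  have ha : Injective a := fun α β h => p.injective (Subtype.ext (he (sub_left_injective h)))
  have hb : Injective b := fun α β h => q.injective (Subtype.ext (he (sub_right_injective h)))
  have hab : ∀ α β, a α ≠ b β := fun α β h =>
    (p α).2.2 ⟨β, by simp only [a, b] at h; rw [← sub_add_cancel (e (p α)) (e t), h]; abel⟩
  refine ⟨fun α => ![a α, b α], injective_vecCons_pair ha hb hab, γ, ?_⟩
  rintro z ((⟨α, rfl⟩ | ⟨α, rfl⟩) | ⟨α, β, rfl⟩)
  · exact hγ _ _ (p α).2.1
  · exact hγ _ _ (q α).2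
  · exact (sub_add_sub_cancel (e (p α)) (e t) (e (q β))).symm ▸
      hγ _ _ ((q β).2.trans (p α).2.1)

end FSMatrix

open Cardinal FSMatrix in
/-- Let `κ` be infinite and `λ = (2^κ)⁺`. Every abelian group `G` of
cardinality `λ` satisfies `G → (κ×2)^{FS_matrix}_κ`: for every colouring of `G` with at
most `κ` colours, there is a family `(x_{α,i} | α < κ, i < 2)` of pairwise distinct
elements such that the colouring is constant on
`{x_{α,0} | α < κ} ∪ {x_{α,1} | α < κ} ∪ {x_{α,0} + x_{β,1} | α, β < κ}`. -/
theorem stmt_2 (κ : Cardinal.{u}) (hκ : Cardinal.aleph0 ≤ κ)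
    (G : Type u) [AddCommGroup G]
    (hG : Cardinal.mk G = Order.succ ((2 : Cardinal.{u}) ^ κ))
    (C : Type u) (c : G → C) (hC : Cardinal.mk C ≤ κ) :
    ∃ x : κ.ord.ToType → Fin 2 → G,
      Function.Injective (fun p : κ.ord.ToType × Fin 2 => x p.1 p.2) ∧
      ∃ δ : C, ∀ z ∈ (Set.range fun α => x α 0) ∪ (Set.range fun α => x α 1) ∪
          {z | ∃ α β, z = x α 0 + x β 1}, c z = δ := by
  let I := (Order.succ κ).ord.ToType
  have hI : #I = Order.succ κ := mk_ord_toType _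
  have hIio : ∀ i : I, #(Set.Iio i) ≤ κ := fun i =>
    Order.lt_succ_iff.mp (by simpa [hI] using mk_Iio_lt i (by simp [I]))
  obtain ⟨w, hw⟩ := exists_forall_greedySeq_ne c hκ hC
    (hI.trans_le (Order.succ_le_of_lt (cantor κ))) hIio (hG ▸ Order.lt_succ _)
  obtain ⟨γ, hγ⟩ := infinite_pigeonhole_card (fun i : I => c (w - greedySeq c w i))
    (Order.succ κ) hI.ge (hκ.trans (Order.le_succ κ))
    (by rw [(isRegular_succ hκ).cof_ord]; exact hC.trans_lt (Order.lt_succ κ))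
  exact exists_fsMatrix_of_map_sub_eq c hκ ((Order.lt_succ κ).trans_le hγ) (mk_ord_toType κ)
    ((greedySeq_injective hw).comp Subtype.val_injective)
    fun x y hxy => (map_greedySeq_sub hw hxy).trans x.2
end

section
/- There do not exist three distinct vectors x, y, z ∈ ℝⁿ such that ‖x‖ = ‖y‖ = ‖z‖ = ‖x+y‖ = ‖x+z‖ = ‖y+z‖ = ‖x+y+z‖, where ‖·‖ denotes the Euclidean norm on ℝⁿ. -/
/-- There are no three distinct vectors `x, y, z ∈ ℝⁿ` with
`‖x‖ = ‖y‖ = ‖z‖ = ‖x+y‖ = ‖x+z‖ = ‖y+z‖ = ‖x+y+z‖` (Euclidean norm). -/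
theorem stmt_3 (n : ℕ) :
    ¬ ∃ x y z : EuclideanSpace ℝ (Fin n),
      x ≠ y ∧ x ≠ z ∧ y ≠ z ∧
      ‖x‖ = ‖y‖ ∧ ‖y‖ = ‖z‖ ∧ ‖z‖ = ‖x + y‖ ∧ ‖x + y‖ = ‖x + z‖ ∧
      ‖x + z‖ = ‖y + z‖ ∧ ‖y + z‖ = ‖x + y + z‖ := by
  rintro ⟨x, y, z, hxy, hxz, hyz, h1, h2, h3, h4, h5, h6⟩
  have e1 := norm_add_sq_real x y
  have e2 := norm_add_sq_real x z
  have e3 := norm_add_sq_real y z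
  have e4 := norm_add_sq_real (x + y) z
  rw [inner_add_left] at e4
  have hx0 : ‖x‖ = 0 := by nlinarith [norm_nonneg x, norm_nonneg (x+y)]
  have hy0 : ‖y‖ = 0 := by rw [← h1]; exact hx0
  exact hxy (by rw [norm_eq_zero] at hx0 hy0; rw [hx0, hy0])
end

section
/- Let ι be an infinite set, let G = ⊕_{α∈ι} ℤ be the free abelian group on ι (finitely supported functions ι → ℤ), and define the colouring c : G → ℤ by c(x) = ∑_{α∈ι} x(α)². Then c takes countably many values, and there do not exist three distinct elements x, y, z ∈ G such that c is constant on the set {x, y, z, x+y, x+z, y+z, x+y+z}. In particular, for every infinite cardinal λ there is an abelian group G of cardinality λ satisfying G ↛ (3)_ω^FS: there is a colouring of G with countably many colours such that no X ⊆ G with |X| = 3 has FS(X) monochromatic. -/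
universe u

/-- `FS X` is the set of finite sums (with no repetitions) of elements of `X`. -/
def FS {G : Type*} [AddCommMonoid G] (X : Set G) : Set G :=
  {g | ∃ F : Finset G, F.Nonempty ∧ ↑F ⊆ X ∧ g = ∑ x ∈ F, x}

lemma no_three {ι : Type u} :
    ¬ ∃ x y z : ι →₀ ℤ, x ≠ y ∧ x ≠ z ∧ y ≠ z ∧
      ∃ k : ℤ, ∀ w ∈ ({x, y, z, x + y, x + z, y + z, x + y + z} : Set (ι →₀ ℤ)),
        (w.sum fun _ v => v ^ 2) = k := by
  classical
  rintro ⟨x, y, z, hxy, hxz, hyz, k, hk⟩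
  set S : Finset ι := x.support ∪ y.support ∪ z.support with hS
  have hxS : x.support ⊆ S := by intro a ha; simp [hS, ha]
  have hyS : y.support ⊆ S := by intro a ha; simp [hS, ha]
  have hzS : z.support ⊆ S := by intro a ha; simp [hS, ha]
  have hQ : ∀ w : ι →₀ ℤ, w.support ⊆ S →
      (w.sum fun _ v => v ^ 2) = ∑ α ∈ S, (w α) ^ 2 := by
    intro w hw
    exact Finsupp.sum_of_support_subset w hw _ (by simp)
  have hadd : ∀ u v : ι →₀ ℤ, u.support ⊆ S → v.support ⊆ S → (u + v).support ⊆ S :=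
    fun u v hu hv => (Finsupp.support_add).trans (Finset.union_subset hu hv)
  have ea : ∑ α ∈ S, (x α) ^ 2 = k := by rw [← hQ x hxS]; exact hk x (by simp)
  have eb : ∑ α ∈ S, (y α) ^ 2 = k := by rw [← hQ y hyS]; exact hk y (by simp)
  have ec : ∑ α ∈ S, (z α) ^ 2 = k := by rw [← hQ z hzS]; exact hk z (by simp)
  have exy : ∑ α ∈ S, (x α + y α) ^ 2 = k := by
    have := hk (x + y) (by simp)
    rw [hQ _ (hadd x y hxS hyS)] at this
    simpa [Finsupp.add_apply] using this
  have exz : ∑ α ∈ S, (x α + z α) ^ 2 = k := by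
    have := hk (x + z) (by simp)
    rw [hQ _ (hadd x z hxS hzS)] at this
    simpa [Finsupp.add_apply] using this
  have eyz : ∑ α ∈ S, (y α + z α) ^ 2 = k := by
    have := hk (y + z) (by simp)
    rw [hQ _ (hadd y z hyS hzS)] at this
    simpa [Finsupp.add_apply] using this
  have exyz : ∑ α ∈ S, (x α + y α + z α) ^ 2 = k := by
    have := hk (x + y + z) (by simp)
    rw [hQ _ (hadd _ z (hadd x y hxS hyS) hzS)] at this
    simpa [Finsupp.add_apply] using this
  -- expand the squares
  set p := ∑ α ∈ S, x α * y α with hp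
  set q := ∑ α ∈ S, x α * z α with hq
  set r := ∑ α ∈ S, y α * z α with hr
  have expand2 : ∀ u v : ι →₀ ℤ, ∑ α ∈ S, (u α + v α) ^ 2 =
      (∑ α ∈ S, (u α) ^ 2) + (∑ α ∈ S, (v α) ^ 2) + 2 * ∑ α ∈ S, u α * v α := by
    intro u v
    rw [Finset.mul_sum, ← Finset.sum_add_distrib, ← Finset.sum_add_distrib]
    exact Finset.sum_congr rfl fun α _ => by ring
  have expand3 : ∑ α ∈ S, (x α + y α + z α) ^ 2 =
      (∑ α ∈ S, (x α) ^ 2) + (∑ α ∈ S, (y α) ^ 2) + (∑ α ∈ S, (z α) ^ 2)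
        + 2 * p + 2 * q + 2 * r := by
    rw [hp, hq, hr, Finset.mul_sum, Finset.mul_sum, Finset.mul_sum,
      ← Finset.sum_add_distrib, ← Finset.sum_add_distrib, ← Finset.sum_add_distrib,
      ← Finset.sum_add_distrib, ← Finset.sum_add_distrib]
    exact Finset.sum_congr rfl fun α _ => by ring
  have hk0 : k = 0 := by
    have h1 := expand2 x y
    have h2 := expand2 x z
    have h3 := expand2 y z
    rw [exy, ea, eb, ← hp] at h1
    rw [exz, ea, ec, ← hq] at h2
    rw [eyz, eb, ec, ← hr] at h3
    rw [exyz, ea, eb, ec] at expand3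
    linarith
  have zero_of : ∀ w : ι →₀ ℤ, w.support ⊆ S → ∑ α ∈ S, (w α) ^ 2 = 0 → w = 0 := by
    intro w hw hsum
    ext α
    by_cases h : α ∈ S
    · have h2 := (Finset.sum_eq_zero_iff_of_nonneg
        (fun i _ => sq_nonneg (w i))).mp hsum α h
      simpa using (pow_eq_zero_iff two_ne_zero).mp h2
    · simpa using fun hc => h (hw (Finsupp.mem_support_iff.mpr hc))
  have hx0 : x = 0 := zero_of x hxS (by rw [ea, hk0])
  have hy0 : y = 0 := zero_of y hyS (by rw [eb, hk0])
  exact hxy (hx0.trans hy0.symm)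

/-- For an infinite index set `ι` and the free abelian group
`G = ⊕_{α ∈ ι} ℤ`, the colouring `c x = ∑_α x(α)²` takes countably many values and admits
no three distinct `x, y, z` with `c` constant on `{x, y, z, x+y, x+z, y+z, x+y+z}`.
In particular, for every infinite cardinal `λ` there is an abelian group of cardinality
`λ` admitting a colouring with countably many colours with no monochromatic `FS(X)` for
`|X| = 3`. -/
theorem stmt_4 :
    (∀ (ι : Type u) [Infinite ι],
      (Set.range fun x : ι →₀ ℤ => x.sum fun _ v => v ^ 2).Countable ∧
      ¬ ∃ x y z : ι →₀ ℤ, x ≠ y ∧ x ≠ z ∧ y ≠ z ∧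
        ∃ k : ℤ, ∀ w ∈ ({x, y, z, x + y, x + z, y + z, x + y + z} : Set (ι →₀ ℤ)),
          (w.sum fun _ v => v ^ 2) = k) ∧
    (∀ lam : Cardinal.{u}, Cardinal.aleph0 ≤ lam →
      ∃ (G : Type u) (inst : AddCommGroup G), Cardinal.mk G = lam ∧
        ∃ c : G → ℕ, ¬ ∃ X : Set G, X.ncard = 3 ∧
          ∃ k, ∀ s ∈ @FS G inst.toAddCommMonoid X, c s = k) := by
  classical
  constructor
  · intro ι _
    exact ⟨Set.to_countable _, no_three⟩
  · intro lam hlam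
    set ι := lam.out with hι
    haveI : Infinite ι := Cardinal.infinite_iff.mpr (by rwa [Cardinal.mk_out])
    refine ⟨ι →₀ ℤ, inferInstance, ?_, ?_⟩
    · rw [Cardinal.mk_finsupp_lift_of_infinite, hι, Cardinal.mk_out,
        Cardinal.lift_uzero, Cardinal.mk_int, Cardinal.lift_aleph0]
      exact max_eq_left hlam
    · refine ⟨fun g => (g.sum fun _ v => v ^ 2).toNat, ?_⟩
      rintro ⟨X, hX3, k, hk⟩
      obtain ⟨x, y, z, hxy, hxz, hyz, rfl⟩ := Set.ncard_eq_three.mp hX3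
      have nonneg : ∀ w : ι →₀ ℤ, 0 ≤ w.sum fun _ v => v ^ 2 :=
        fun w => Finset.sum_nonneg fun i _ => sq_nonneg _
      have mem : ∀ w : ι →₀ ℤ,
          w ∈ ({x, y, z, x + y, x + z, y + z, x + y + z} : Set (ι →₀ ℤ)) →
          w ∈ FS ({x, y, z} : Set (ι →₀ ℤ)) := by
        have m1 : x ∈ FS ({x, y, z} : Set (ι →₀ ℤ)) :=
          ⟨(singleton x : Finset (ι →₀ ℤ)), by simp, by simp, by simp⟩
        have m2 : y ∈ FS ({x, y, z} : Set (ι →₀ ℤ)) :=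
          ⟨(singleton y : Finset (ι →₀ ℤ)), by simp, by simp, by simp⟩
        have m3 : z ∈ FS ({x, y, z} : Set (ι →₀ ℤ)) :=
          ⟨(singleton z : Finset (ι →₀ ℤ)), by simp, by simp, by simp⟩
        have m4 : x + y ∈ FS ({x, y, z} : Set (ι →₀ ℤ)) :=
          ⟨{x, y}, by simp, by intro a; simp; tauto,
            by rw [Finset.sum_pair hxy]⟩
        have m5 : x + z ∈ FS ({x, y, z} : Set (ι →₀ ℤ)) :=
          ⟨{x, z}, by simp, by intro a; simp; tauto,
            by rw [Finset.sum_pair hxz]⟩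
        have m6 : y + z ∈ FS ({x, y, z} : Set (ι →₀ ℤ)) :=
          ⟨{y, z}, by simp, by intro a; simp; tauto,
            by rw [Finset.sum_pair hyz]⟩
        have m7 : x + y + z ∈ FS ({x, y, z} : Set (ι →₀ ℤ)) := by
          refine ⟨{x, y, z}, by simp, by intro a; simp, ?_⟩
          rw [Finset.sum_insert (by simp [hxy, hxz]), Finset.sum_pair hyz]
          exact add_assoc x y z
        intro w hw
        simp only [Set.mem_insert_iff, Set.mem_singleton_iff] at hw
        rcases hw with h | h | h | h | h | h | h <;> rw [h] <;> assumption
      refine no_three ⟨x, y, z, hxy, hxz, hyz, x.sum fun _ v => v ^ 2, ?_⟩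
      intro w hw
      have h2 : (w.sum fun _ v => v ^ 2).toNat = k := hk w (mem w hw)
      have h3 : (x.sum fun _ v => v ^ 2).toNat = k := hk x (mem x (by simp))
      have h1 : ((w.sum fun _ v => v ^ 2).toNat : ℤ) =
          ((x.sum fun _ v => v ^ 2).toNat : ℤ) := by rw [h2, h3]
      rwa [Int.toNat_of_nonneg (nonneg w), Int.toNat_of_nonneg (nonneg x)] at h1
end

section
/- Let κ be an infinite cardinal and let G be an abelian group having at most κ elements of finite (additive) order. Then G ↛ (3)_κ^FS: there exists a colouring c : G → C with |C| ≤ κ such that there is no X ⊆ G with |X| = 3 for which FS(X) is monochromatic for c. -/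
universe u

/-- The "sum of squares" positive definite quadratic form on `ι →₀ ℚ`. -/
noncomputable def qf {ι : Type*} (x : ι →₀ ℚ) : ℚ := x.sum fun _ a => a ^ 2

theorem qf_eq_sum {ι : Type*} (x : ι →₀ ℚ) (s : Finset ι) (h : x.support ⊆ s) :
    qf x = ∑ i ∈ s, (x i) ^ 2 :=
  Finsupp.sum_of_support_subset x h _ (fun i _ => by simp)

theorem qf_eq_zero {ι : Type*} {x : ι →₀ ℚ} (h : qf x = 0) : x = 0 := by
  have h' : ∑ i ∈ x.support, (x i) ^ 2 = 0 := by
    rw [← qf_eq_sum x x.support subset_rfl, h]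
  have hz := (Finset.sum_eq_zero_iff_of_nonneg (fun i _ => sq_nonneg (x i))).1 h'
  ext i
  by_cases hi : i ∈ x.support
  · exact pow_eq_zero_iff two_ne_zero |>.1 (hz i hi)
  · simpa using Finsupp.notMem_support_iff.1 hi

/-- Core algebraic lemma: if all seven subset sums of `u, v, w` have the same
value of the sum-of-squares form, then `u = 0`. -/
theorem qf_core {ι : Type*} (u v w : ι →₀ ℚ) (t : ℚ)
    (hu : qf u = t) (hv : qf v = t) (hw : qf w = t)
    (huv : qf (u + v) = t) (huw : qf (u + w) = t) (hvw : qf (v + w) = t)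
    (huvw : qf (u + v + w) = t) : u = 0 := by
  classical
  set s : Finset ι := (u.support ∪ v.support) ∪ w.support with hs
  have hus : u.support ⊆ s := by
    intro i hi; exact Finset.mem_union_left _ (Finset.mem_union_left _ hi)
  have hvs : v.support ⊆ s := by
    intro i hi; exact Finset.mem_union_left _ (Finset.mem_union_right _ hi)
  have hws : w.support ⊆ s := Finset.subset_union_right
  have huvs : (u + v).support ⊆ s :=
    (Finsupp.support_add).trans (Finset.union_subset hus hvs)
  have huws : (u + w).support ⊆ s :=
    (Finsupp.support_add).trans (Finset.union_subset hus hws)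
  have hvws : (v + w).support ⊆ s :=
    (Finsupp.support_add).trans (Finset.union_subset hvs hws)
  have huvws : (u + v + w).support ⊆ s :=
    (Finsupp.support_add).trans (Finset.union_subset huvs hws)
  have Eu : ∑ i ∈ s, (u i) ^ 2 = t := by rw [← qf_eq_sum u s hus]; exact hu
  have Ev : ∑ i ∈ s, (v i) ^ 2 = t := by rw [← qf_eq_sum v s hvs]; exact hv
  have Ew : ∑ i ∈ s, (w i) ^ 2 = t := by rw [← qf_eq_sum w s hws]; exact hw
  have Euv : ∑ i ∈ s, (u i + v i) ^ 2 = t := by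
    have := qf_eq_sum (u + v) s huvs
    simp only [Finsupp.add_apply] at this
    rw [← this]; exact huv
  have Euw : ∑ i ∈ s, (u i + w i) ^ 2 = t := by
    have := qf_eq_sum (u + w) s huws
    simp only [Finsupp.add_apply] at this
    rw [← this]; exact huw
  have Evw : ∑ i ∈ s, (v i + w i) ^ 2 = t := by
    have := qf_eq_sum (v + w) s hvws
    simp only [Finsupp.add_apply] at this
    rw [← this]; exact hvw
  have Euvw : ∑ i ∈ s, (u i + v i + w i) ^ 2 = t := by
    have := qf_eq_sum (u + v + w) s huvws
    simp only [Finsupp.add_apply] at this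
    rw [← this]; exact huvw
  -- the key pointwise identity
  have Hkey : ∑ i ∈ s, ((u i + v i + w i) ^ 2 + (u i) ^ 2 + (v i) ^ 2 + (w i) ^ 2
      - (u i + v i) ^ 2 - (u i + w i) ^ 2 - (v i + w i) ^ 2) = 0 :=
    Finset.sum_eq_zero fun i _ => by ring
  have Ht : t = 0 := by
    have expand :
        ∑ i ∈ s, ((u i + v i + w i) ^ 2 + (u i) ^ 2 + (v i) ^ 2 + (w i) ^ 2
          - (u i + v i) ^ 2 - (u i + w i) ^ 2 - (v i + w i) ^ 2)
        = (∑ i ∈ s, (u i + v i + w i) ^ 2) + (∑ i ∈ s, (u i) ^ 2)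
          + (∑ i ∈ s, (v i) ^ 2) + (∑ i ∈ s, (w i) ^ 2)
          - (∑ i ∈ s, (u i + v i) ^ 2) - (∑ i ∈ s, (u i + w i) ^ 2)
          - (∑ i ∈ s, (v i + w i) ^ 2) := by
      simp [Finset.sum_add_distrib, Finset.sum_sub_distrib]
    rw [expand, Euvw, Eu, Ev, Ew, Euv, Euw, Evw] at Hkey
    linarith
  exact qf_eq_zero (by rw [hu, Ht])

/-- If `κ` is infinite and the abelian group `G` has at most `κ`
elements of finite order, then `G ↛ (3)_κ^FS`: there is a colouring with at most `κ`
colours admitting no `X ⊆ G` with `|X| = 3` and `FS(X)` monochromatic. -/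
theorem stmt_5 (κ : Cardinal.{u}) (hκ : Cardinal.aleph0 ≤ κ)
    (G : Type u) [AddCommGroup G]
    (hG : Cardinal.mk {x : G // IsOfFinAddOrder x} ≤ κ) :
    ∃ (C : Type u) (c : G → C), Cardinal.mk C ≤ κ ∧
      ¬ ∃ X : Set G, X.ncard = 3 ∧ ∃ k, ∀ s ∈ FS X, c s = k := by
  classical
  -- localize away the torsion
  let V := LocalizedModule (nonZeroDivisors ℤ) G
  let K := FractionRing ℤ
  let bV := Module.Basis.ofVectorSpace K V
  let ι := Module.Basis.ofVectorSpaceIndex K V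
  let e : K ≃ₐ[ℤ] ℚ := IsLocalization.algEquiv (nonZeroDivisors ℤ) K ℚ
  let f1 := LocalizedModule.mkLinearMap (nonZeroDivisors ℤ) G
  let ψfun : G → (ι →₀ ℚ) := fun g => (bV.repr (f1 g)).mapRange e (map_zero e)
  have hψadd : ∀ x y : G, ψfun (x + y) = ψfun x + ψfun y := by
    intro x y
    simp only [ψfun, map_add]
    exact Finsupp.mapRange_add (fun a b => map_add e a b) _ _
  let ψ : G →+ (ι →₀ ℚ) := AddMonoidHom.mk' ψfun hψadd
  have hψ : ∀ g : G, ψ g = (bV.repr (f1 g)).mapRange e (map_zero e) := fun g => rfl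
  have hψ0 : ∀ g : G, ψ g = 0 ↔ IsOfFinAddOrder g := by
    intro g
    have h1 : ψ g = 0 ↔ bV.repr (f1 g) = 0 := by
      rw [hψ g]
      constructor
      · intro h
        ext i
        have h' := DFunLike.congr_fun h i
        simp only [Finsupp.mapRange_apply, Finsupp.coe_zero, Pi.zero_apply] at h'
        have := e.injective (by simpa using h')
        simpa using this
      · intro h
        rw [h]
        simp
    have h2 : bV.repr (f1 g) = 0 ↔ f1 g = 0 := by
      constructor
      · intro h
        have := bV.repr.injective (by simpa using h)
        simpa using this
      · intro h; rw [h]; simp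
    have h3 : f1 g = 0 ↔ ∃ s : nonZeroDivisors ℤ, s • g = 0 := by
      have hf1 : f1 g = LocalizedModule.mk g (1 : nonZeroDivisors ℤ) := rfl
      rw [hf1, ← LocalizedModule.zero_mk (1 : nonZeroDivisors ℤ), LocalizedModule.mk_eq]
      constructor
      · rintro ⟨u, hu⟩
        exact ⟨u, by simpa using hu⟩
      · rintro ⟨s, hs⟩
        exact ⟨s, by simpa using hs⟩
    have h4 : (∃ s : nonZeroDivisors ℤ, s • g = 0) ↔ IsOfFinAddOrder g := by
      constructor
      · rintro ⟨s, hs⟩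
        have hne : (s : ℤ) ≠ 0 := nonZeroDivisors.coe_ne_zero s
        rw [isOfFinAddOrder_iff_nsmul_eq_zero]
        refine ⟨(s : ℤ).natAbs, Int.natAbs_pos.2 hne, ?_⟩
        have hz : (s : ℤ) • g = 0 := hs
        rcases Int.natAbs_eq (s : ℤ) with h | h
        · have : ((s : ℤ).natAbs : ℤ) • g = 0 := by rw [← h]; exact hz
          simpa using this
        · have : (-((s : ℤ).natAbs : ℤ)) • g = 0 := by rw [← h]; exact hz
          rw [neg_smul, neg_eq_zero] at this
          simpa using this
      · intro h
        obtain ⟨n, hn, h0⟩ := isOfFinAddOrder_iff_nsmul_eq_zero.1 h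
        refine ⟨⟨(n : ℤ), mem_nonZeroDivisors_of_ne_zero (by exact_mod_cast hn.ne')⟩, ?_⟩
        show ((n : ℤ)) • g = 0
        simpa using h0
    rw [h1, h2, h3, h4]
  -- a section of ψ on its range
  let sec : (ι →₀ ℚ) → G := fun x => if h : ∃ g, ψ g = x then h.choose else 0
  have hsec : ∀ g : G, ψ (sec (ψ g)) = ψ g := by
    intro g
    have h : ∃ g', ψ g' = ψ g := ⟨g, rfl⟩
    simp only [sec, dif_pos h]
    exact h.choose_spec
  have htor : ∀ g : G, IsOfFinAddOrder (g - sec (ψ g)) := by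
    intro g
    rw [← hψ0]
    rw [map_sub, hsec, sub_self]
  -- the colouring
  refine ⟨ULift.{u} ℚ × {x : G // IsOfFinAddOrder x},
    fun g => (ULift.up (qf (ψ g)), ⟨g - sec (ψ g), htor g⟩), ?_, ?_⟩
  · -- cardinality bound
    have h1 : Cardinal.mk (ULift.{u} ℚ × {x : G // IsOfFinAddOrder x})
        = Cardinal.mk (ULift.{u} ℚ) * Cardinal.mk {x : G // IsOfFinAddOrder x} := by
      rw [Cardinal.mk_prod, Cardinal.lift_id, Cardinal.lift_id]
    rw [h1, Cardinal.mk_uLift, Cardinal.mk_denumerable, Cardinal.lift_aleph0]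
    calc Cardinal.aleph0 * Cardinal.mk {x : G // IsOfFinAddOrder x}
        ≤ κ * κ := mul_le_mul' hκ hG
      _ = κ := Cardinal.mul_eq_self hκ
  · -- no monochromatic FS of a 3-element set
    rintro ⟨X, hX3, k, hk⟩
    obtain ⟨a, b, c, hab, hac, hbc, rfl⟩ := Set.ncard_eq_three.mp hX3
    -- memberships in FS
    have haX : a ∈ ({a, b, c} : Set G) := by simp
    have hbX : b ∈ ({a, b, c} : Set G) := by simp
    have hcX : c ∈ ({a, b, c} : Set G) := by simp
    have mem1 : ∀ x ∈ ({a, b, c} : Set G), x ∈ FS ({a, b, c} : Set G) := by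
      intro x hx
      exact ⟨{x}, Finset.singleton_nonempty x, by simpa using hx, by simp⟩
    have mem2 : ∀ x ∈ ({a, b, c} : Set G), ∀ y ∈ ({a, b, c} : Set G), x ≠ y →
        x + y ∈ FS ({a, b, c} : Set G) := by
      intro x hx y hy hxy
      refine ⟨{x, y}, ⟨x, by simp⟩, ?_, (Finset.sum_pair (f := fun z => z) hxy).symm⟩
      intro z hz
      simp only [Finset.coe_insert, Finset.coe_singleton, Set.mem_insert_iff,
        Set.mem_singleton_iff] at hz
      rcases hz with h | h
      · rw [h]; exact hx
      · rw [h]; exact hy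
    have mem3 : a + b + c ∈ FS ({a, b, c} : Set G) := by
      refine ⟨{a, b, c}, ⟨a, by simp⟩, ?_, ?_⟩
      · intro z hz
        simp only [Finset.coe_insert, Finset.coe_singleton, Set.mem_insert_iff,
          Set.mem_singleton_iff] at hz
        rcases hz with h | h | h <;> simp [h]
      · rw [Finset.sum_insert (by simp [hab, hac]), Finset.sum_pair (f := fun z => z) hbc, add_assoc]
    -- all seven sums have the same colour `k`
    have hcol : ∀ s ∈ FS ({a, b, c} : Set G), ∀ t ∈ FS ({a, b, c} : Set G),
        ψ s = ψ t → s = t := by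
      intro s hs t ht hst
      have h1 := hk s hs
      have h2 := hk t ht
      have h3 : (⟨s - sec (ψ s), htor s⟩ : {x : G // IsOfFinAddOrder x})
          = ⟨t - sec (ψ t), htor t⟩ := by
        have := h1.trans h2.symm
        exact congrArg Prod.snd this
      have h4 : s - sec (ψ s) = t - sec (ψ t) := congrArg Subtype.val h3
      rw [hst] at h4
      exact sub_left_injective h4
    have hq : ∀ s ∈ FS ({a, b, c} : Set G), qf (ψ s) = (k.1).down := by
      intro s hs
      have h1 := hk s hs
      have := congrArg Prod.fst h1
      exact congrArg ULift.down this
    -- apply the core lemma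
    have hu : qf (ψ a) = (k.1).down := hq a (mem1 a haX)
    have hv : qf (ψ b) = (k.1).down := hq b (mem1 b hbX)
    have hw : qf (ψ c) = (k.1).down := hq c (mem1 c hcX)
    have huv : qf (ψ a + ψ b) = (k.1).down := by
      rw [← map_add]; exact hq _ (mem2 a haX b hbX hab)
    have huw : qf (ψ a + ψ c) = (k.1).down := by
      rw [← map_add]; exact hq _ (mem2 a haX c hcX hac)
    have hvw : qf (ψ b + ψ c) = (k.1).down := by
      rw [← map_add]; exact hq _ (mem2 b hbX c hcX hbc)
    have huvw : qf (ψ a + ψ b + ψ c) = (k.1).down := by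
      rw [← map_add, ← map_add]; exact hq _ mem3
    have hA : ψ a = 0 := qf_core (ψ a) (ψ b) (ψ c) _ hu hv hw huv huw hvw huvw
    have hB : ψ b = 0 := by
      refine qf_core (ψ b) (ψ a) (ψ c) _ hv hu hw ?_ hvw huw ?_
      · rw [add_comm]; exact huv
      · rw [show ψ b + ψ a + ψ c = ψ a + ψ b + ψ c by abel]; exact huvw
    exact hab (hcol a (mem1 a haX) b (mem1 b hbX) (hA.trans hB.symm))
end

section
/- Let n be a positive integer and m ≥ 2. Suppose there exists a cardinal λ such that every abelian group G with at least λ elements of additive order m satisfies G → (n)_ω^FS (that is, for every colouring c : G → ℕ there exists X ⊆ G with |X| = n such that FS(X) is monochromatic for c). Then there exists an n-adequate pattern modulo m. -/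
universe u

/-- A sequence `(x_k | k < n)` of elements of `(ℤ/mℤ)^l` is an `n`-adequate pattern
modulo `m` if the map `σ` (sending a vector to its list of nonzero entries, in increasing
order of index) is constant on `{∑_{k ∈ F} x_k | ∅ ≠ F ⊆ {0, …, n-1}}`. -/
def IsAdequatePattern (n m l : ℕ) (x : Fin n → Fin l → ZMod m) : Prop :=
  ∃ w : List (ZMod m), ∀ F : Finset (Fin n), F.Nonempty →
    ((List.ofFn (∑ k ∈ F, x k)).filter fun a => a ≠ 0) = w

/-!
Take the free `ℤ/mℤ`-module `G = ⨁_{i < λ} ℤ/mℤ` on a well-ordered index set of size `λ`;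
its basis vectors have order `m`, so `G → (n)_ω^FS`. Since `σ` takes only countably many
values, it is an `ω`-colouring of `G`, giving `X = {y₀, …, y_{n-1}}` with `σ` constant on
`FS X`. Restricting the `y_k` to the finite union `S` of their supports, enumerated
increasingly, does not change `σ` of any finite sum, so it yields an adequate pattern
modulo `m` of length `|S|`.
-/

universe v

open Finset Cardinal

namespace Finsupp

theorem lift_mk_le_mk_addOrderOf_eq {ι : Type u} {M : Type v} [AddMonoid M] {a : M}
    (ha : a ≠ 0) : Cardinal.lift.{v} #ι ≤ #{g : ι →₀ M // addOrderOf g = addOrderOf a} := by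
  have := lift_mk_le_lift_mk_of_injective (β := {g : ι →₀ M // addOrderOf g = addOrderOf a})
    (f := fun i => ⟨single i a, addOrderOf_injective (singleAddHom i) (single_injective i) a⟩)
    fun _ _ hij => single_left_injective ha (congrArg Subtype.val hij)
  rwa [lift_umax.{u, v}, lift_id'.{u, v}] at this

section LinearOrder

variable {ι M : Type*} [LinearOrder ι] [Zero M]

/-- The map `σ`. -/
def nonzeroEntries (g : ι →₀ M) : List M := g.support.sort.map g

theorem filter_ofFn_comp_orderEmbOfFin [DecidableEq M] (g : ι →₀ M) {S : Finset ι}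
    (hS : g.support ⊆ S) :
    (List.ofFn (g ∘ S.orderEmbOfFin rfl)).filter (· ≠ 0) = g.nonzeroEntries := by
  have hofFn : List.ofFn (g ∘ S.orderEmbOfFin rfl) = S.sort.map g :=
    List.ext_getElem (by simp) fun i _ _ => by simp [orderEmbOfFin_apply]
  have hfilter : S.sort.filter (g · ≠ 0) = g.support.sort :=
    ((S.sortedLT_sort.pairwise.filter _).sortedLT).eq_of_mem_iff g.support.sortedLT_sort
      fun i => by simpa using fun hi => hS (mem_support_iff.2 hi)
  rw [hofFn, List.filter_map, nonzeroEntries, ← hfilter]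
  rfl

end LinearOrder

end Finsupp

theorem Set.exists_injective_fin_of_ncard_eq {α : Type*} {X : Set α} {n : ℕ} (hX : X.ncard = n)
    (hn : 0 < n) : ∃ y : Fin n → α, Function.Injective y ∧ ∀ j, y j ∈ X := by
  have : Finite X := Set.finite_of_ncard_pos (hX ▸ hn)
  let e := Finite.equivFinOfCardEq ((Nat.card_coe_set_eq X).trans hX)
  exact ⟨Subtype.val ∘ e.symm, Subtype.val_injective.comp e.symm.injective, fun j => (e.symm j).2⟩

theorem sum_mem_FS {G κ : Type*} [AddCommMonoid G] {X : Set G} {y : κ → G}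
    (hy : Function.Injective y) (hyX : ∀ j, y j ∈ X) {F : Finset κ} (hF : F.Nonempty) :
    ∑ j ∈ F, y j ∈ FS X :=
  ⟨F.map ⟨y, hy⟩, hF.map, by simpa [Set.subset_def] using fun j _ => hyX j, by rw [sum_map]; rfl⟩

theorem isAdequatePattern_comp_orderEmbOfFin {n m : ℕ} {ι : Type*} [LinearOrder ι]
    (y : Fin n → ι →₀ ZMod m) {S : Finset ι} (hS : ∀ j, (y j).support ⊆ S)
    (hy : ∃ w, ∀ F : Finset (Fin n), F.Nonempty → (∑ j ∈ F, y j).nonzeroEntries = w) :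
    IsAdequatePattern n m S.card fun j => y j ∘ S.orderEmbOfFin rfl := by
  obtain ⟨w, hw⟩ := hy
  refine ⟨w, fun F hF => ?_⟩
  have hsupp : (∑ j ∈ F, y j).support ⊆ S :=
    Finsupp.support_finsetSum.trans (biUnion_subset.2 fun j _ => hS j)
  rw [← hw F hF, ← Finsupp.filter_ofFn_comp_orderEmbOfFin _ hsupp]
  congr 2
  ext i
  simp

/-- If there is a cardinal `λ` such that every abelian group with at
least `λ` elements of order `m` satisfies `G → (n)_ω^FS`, then there is an `n`-adequate
pattern modulo `m`. -/
theorem stmt_7 (n m : ℕ) (hn : 0 < n) (hm : 2 ≤ m)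
    (h : ∃ lam : Cardinal.{u}, ∀ (G : Type u) [AddCommGroup G],
      lam ≤ Cardinal.mk {g : G // addOrderOf g = m} →
      ∀ c : G → ℕ, ∃ X : Set G, X.ncard = n ∧ ∃ k, ∀ s ∈ FS X, c s = k) :
    ∃ (l : ℕ) (x : Fin n → Fin l → ZMod m), IsAdequatePattern n m l x := by
  obtain ⟨lam, hlam⟩ := h
  have : Fact (1 < m) := ⟨hm⟩
  have hG : lam ≤ #{g : lam.ord.ToType →₀ ZMod m // addOrderOf g = m} := by
    simpa [ZMod.addOrderOf_one] using
      (Finsupp.lift_mk_le_mk_addOrderOf_eq (ι := lam.ord.ToType) (one_ne_zero' (ZMod m)))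
  obtain ⟨enc, henc⟩ : ∃ enc : List (ZMod m) → ℕ, Function.Injective enc :=
    Countable.exists_injective_nat _
  obtain ⟨X, hXn, k, hk⟩ := hlam _ hG (enc ∘ Finsupp.nonzeroEntries)
  obtain ⟨y, hy, hyX⟩ := Set.exists_injective_fin_of_ncard_eq hXn hn
  refine ⟨_, _, isAdequatePattern_comp_orderEmbOfFin y
    (fun j => le_sup (f := fun j => (y j).support) (mem_univ j))
    ⟨(y ⟨0, hn⟩).nonzeroEntries, fun F hF => henc ?_⟩⟩
  have hsingle := hk _ (sum_mem_FS hy hyX (singleton_nonempty ⟨0, hn⟩))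
  rw [sum_singleton] at hsingle
  exact (hk _ (sum_mem_FS hy hyX hF)).trans hsingle.symm
end

section
/- Let λ be an uncountable regular cardinal and let G be an abelian group whose set of elements of finite additive order has cardinality λ. Then there exist a prime number p and a subgroup H ⊆ G with |H| = λ such that every nonzero element of H has additive order p. -/
universe u

open Cardinal

private lemma stmt8_aux {G : Type u} [AddCommGroup G] (lam : Cardinal.{u})
    (h1 : Cardinal.aleph0 < lam)
    (hbound : ∀ m : ℕ, 0 < m → #{x : G // m • x = 0} ≤ lam) :
    ∀ N : ℕ, 0 < N → #{x : G // N • x = 0} = lam →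
      ∃ p : ℕ, p.Prime ∧ #{x : G // p • x = 0} = lam := by
  intro N
  induction N using Nat.strong_induction_on with
  | _ N ih =>
    intro hN hcard
    by_cases hN1 : N = 1
    · exfalso
      subst hN1
      have : #{x : G // 1 • x = 0} ≤ 1 := by
        apply Cardinal.mk_le_one_iff_set_subsingleton.mpr
        intro a ha b hb
        have ha' : (1 : ℕ) • a = 0 := ha
        have hb' : (1 : ℕ) • b = 0 := hb
        simp only [one_smul] at ha' hb'
        rw [ha', hb']
      rw [hcard] at this
      exact absurd (this.trans_lt Cardinal.one_lt_aleph0) (lt_asymm h1)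
    · set p := N.minFac with hpdef
      have hp : p.Prime := Nat.minFac_prime hN1
      set M := N / p with hMdef
      have hNM : p * M = N := Nat.mul_div_cancel' (Nat.minFac_dvd N)
      have hM : 0 < M := Nat.div_pos (Nat.minFac_le hN) hp.pos
      have hMlt : M < N := Nat.div_lt_self hN hp.one_lt
      -- fiber bound: #(S N) ≤ #(S p) * #(S M)
      have hle : #{x : G // N • x = 0} ≤ #{x : G // p • x = 0} * #{x : G // M • x = 0} := by
        have hg : ∀ x : {x : G // N • x = 0}, p • (M • x.1) = 0 := by
          intro x
          rw [smul_smul, hNM, x.2]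
        let g : {x : G // N • x = 0} → {x : G // p • x = 0} := fun x => ⟨M • x.1, hg x⟩
        apply Cardinal.mk_le_mk_mul_of_mk_preimage_le g
        intro b
        rcases isEmpty_or_nonempty (g ⁻¹' {b}) with he | ⟨⟨x0, hx0⟩⟩
        · simp
        · have : ∀ y : (g ⁻¹' {b}), M • (y.1.1 - x0.1) = 0 := by
            intro y
            have h1' : M • y.1.1 = b.1 := congrArg Subtype.val y.2
            have h2' : M • x0.1 = b.1 := congrArg Subtype.val hx0
            rw [smul_sub, h1', h2', sub_self]
          apply Cardinal.mk_le_of_injective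
            (f := fun y : (g ⁻¹' {b}) => (⟨y.1.1 - x0.1, this y⟩ : {x : G // M • x = 0}))
          intro a b' hab
          have : a.1.1 - x0.1 = b'.1.1 - x0.1 := congrArg Subtype.val hab
          have : a.1.1 = b'.1.1 := by
            have := sub_left_injective this
            exact this
          exact Subtype.ext (Subtype.ext this)
      by_cases hMcard : #{x : G // M • x = 0} = lam
      · exact ih M hMlt hM hMcard
      · have hMlt' : #{x : G // M • x = 0} < lam :=
          lt_of_le_of_ne (hbound M hM) hMcard
        refine ⟨p, hp, ?_⟩
        have hple : #{x : G // p • x = 0} ≤ lam := hbound p hp.pos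
        rcases lt_or_eq_of_le hple with hlt | heq
        · exfalso
          have := Cardinal.mul_lt_of_lt h1.le hlt hMlt'
          rw [← hcard] at this
          exact absurd hle (not_le_of_gt this)
        · exact heq

/-- If `λ` is an uncountable regular cardinal and the abelian group `G`
has exactly `λ` elements of finite order, then there are a prime `p` and a subgroup
`H ⊆ G` of cardinality `λ` all of whose nonzero elements have order `p`. -/
theorem stmt_8 (lam : Cardinal.{u}) (h1 : Cardinal.aleph0 < lam) (h2 : lam.IsRegular)
    (G : Type u) [AddCommGroup G]
    (hG : Cardinal.mk {x : G // IsOfFinAddOrder x} = lam) :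
    ∃ p : ℕ, p.Prime ∧ ∃ H : AddSubgroup G, Cardinal.mk H = lam ∧
      ∀ x ∈ H, x ≠ 0 → addOrderOf x = p := by
  -- every `S m` (m > 0) embeds into the torsion subtype
  have hbound : ∀ m : ℕ, 0 < m → #{x : G // m • x = 0} ≤ lam := by
    intro m hm
    rw [← hG]
    apply Cardinal.mk_le_of_injective
      (f := fun x : {x : G // m • x = 0} =>
        (⟨x.1, isOfFinAddOrder_iff_nsmul_eq_zero.mpr ⟨m, hm, x.2⟩⟩ :
          {x : G // IsOfFinAddOrder x}))
    intro a b hab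
    simp only [Subtype.mk.injEq] at hab
    exact Subtype.ext hab
  -- torsion set is the countable union of the sets killed by factorials
  have hset : {x : G | IsOfFinAddOrder x} = ⋃ n : ℕ, {x : G | n.factorial • x = 0} := by
    ext x
    simp only [Set.mem_setOf_eq, Set.mem_iUnion]
    constructor
    · intro hx
      refine ⟨addOrderOf x, ?_⟩
      exact addOrderOf_dvd_iff_nsmul_eq_zero.mp (Nat.dvd_factorial hx.addOrderOf_pos le_rfl)
    · rintro ⟨n, hn⟩
      exact isOfFinAddOrder_iff_nsmul_eq_zero.mpr ⟨n.factorial, n.factorial_pos, hn⟩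
  -- some factorial level has full cardinality
  have hexN : ∃ N : ℕ, 0 < N ∧ #{x : G // N • x = 0} = lam := by
    by_contra hcon
    push_neg at hcon
    have hall : ∀ n : ℕ, #{x : G | n.factorial • x = 0} < lam := by
      intro n
      have h' : #{x : G // n.factorial • x = 0} ≤ lam := hbound _ n.factorial_pos
      have hne := hcon n.factorial n.factorial_pos
      exact lt_of_le_of_ne h' hne
    have hsum : Cardinal.sum (fun n : ℕ => #{x : G | n.factorial • x = 0}) < lam :=
      Cardinal.sum_lt_lift_of_isRegular h2 (by simpa using h1) hall
    have : lam ≤ Cardinal.sum (fun n : ℕ => #{x : G | n.factorial • x = 0}) := by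
      calc lam = #{x : G | IsOfFinAddOrder x} := hG.symm
        _ = #(⋃ n : ℕ, {x : G | n.factorial • x = 0}) := by rw [hset]
        _ = Cardinal.lift.{0} #(⋃ n : ℕ, {x : G | n.factorial • x = 0}) := by
            rw [Cardinal.lift_id']
        _ ≤ _ := Cardinal.mk_iUnion_le_sum_mk_lift
    exact absurd hsum (not_lt_of_ge this)
  obtain ⟨N, hN, hNcard⟩ := hexN
  obtain ⟨p, hp, hpcard⟩ := stmt8_aux lam h1 hbound N hN hNcard
  refine ⟨p, hp, ?_⟩
  refine ⟨{ carrier := {x : G | p • x = 0},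
            zero_mem' := by simp,
            add_mem' := by
              intro a b ha hb
              simp only [Set.mem_setOf_eq] at *
              rw [smul_add, ha, hb, add_zero],
            neg_mem' := by
              intro a ha
              simp only [Set.mem_setOf_eq] at *
              rw [smul_neg, ha, neg_zero] }, ?_, ?_⟩
  · exact hpcard
  · intro x hx hx0
    have hdvd : addOrderOf x ∣ p := addOrderOf_dvd_of_nsmul_eq_zero hx
    rcases (Nat.Prime.eq_one_or_self_of_dvd hp _ hdvd) with h | h
    · exact absurd (AddMonoid.addOrderOf_eq_one_iff.mp h) hx0
    · exact h
end

section
/- Let κ be an infinite cardinal and let B be a Boolean group of cardinality 2^κ. Then B ↛ (2)_κ^FS: there exists a colouring c : B → C with |C| ≤ κ such that for no two distinct elements x, y ∈ B is the set {x, y, x + y} monochromatic for c. -/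
universe u

noncomputable section StmtNineAux

open Classical

variable {O : Type u} [LinearOrder O] [WellFoundedLT O] [Nonempty O]

/-- First level at which two branches differ (junk if equal). -/
noncomputable def sdd (f g : O → Bool) : O :=
  if h : {α : O | f α ≠ g α}.Nonempty then
    (IsWellFounded.wf (r := ((· < ·) : O → O → Prop))).min _ h
  else Classical.arbitrary O

lemma sdd_ne {f g : O → Bool} (h : f ≠ g) : f (sdd f g) ≠ g (sdd f g) := by
  have hne : {α : O | f α ≠ g α}.Nonempty := by
    obtain ⟨a, ha⟩ := Function.ne_iff.mp h
    exact ⟨a, ha⟩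
  rw [sdd, dif_pos hne]
  exact (IsWellFounded.wf (r := ((· < ·) : O → O → Prop))).min_mem _ hne

/-- Splitting levels of a finite set of branches. -/
noncomputable def sD (F : Finset (O → Bool)) : Finset O :=
  F.offDiag.image fun p => sdd p.1 p.2

/-- Trace of a branch on a finite set of levels. -/
noncomputable def skey (D : Finset O) (f : O → Bool) : Finset O :=
  D.filter fun α => f α = true

/-- The colouring of a finite set of branches. -/
noncomputable def scol (F : Finset (O → Bool)) : Finset O × Finset (Finset O) :=
  (sD F, F.image (skey (sD F)))

lemma skey_inj {F : Finset (O → Bool)} {f g : O → Bool} (hf : f ∈ F) (hg : g ∈ F)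
    (h : skey (sD F) f = skey (sD F) g) : f = g := by
  by_contra hne
  have hd : sdd f g ∈ sD F :=
    Finset.mem_image.mpr ⟨(f, g), Finset.mem_offDiag.mpr ⟨hf, hg, hne⟩, rfl⟩
  have hx := sdd_ne hne
  have hiff : (sdd f g ∈ skey (sD F) f) ↔ (sdd f g ∈ skey (sD F) g) := by rw [h]
  simp only [skey, Finset.mem_filter, hd, true_and] at hiff
  cases hf' : f (sdd f g) <;> cases hg' : g (sdd f g) <;> simp_all

lemma score (F G H : Finset (O → Bool)) (hH : H = symmDiff F G) (hne : H.Nonempty)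
    (h1 : scol F = scol H) (h2 : scol G = scol H) : False := by
  obtain ⟨h₀, hh₀⟩ := hne
  set D := sD H with hD
  set t := skey D h₀ with ht
  have key1 : ∀ S : Finset (O → Bool), scol S = scol H →
      (S.filter fun f => skey D f = t).card = 1 := by
    intro S hS
    have hDS : sD S = D := congrArg Prod.fst hS
    have himg : S.image (skey (sD S)) = H.image (skey (sD H)) := congrArg Prod.snd hS
    rw [hDS, ← hD] at himg
    have htS : t ∈ S.image (skey D) := by
      rw [himg]; exact Finset.mem_image_of_mem _ hh₀
    obtain ⟨f, hfS, hft⟩ := Finset.mem_image.mp htS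
    rw [Finset.card_eq_one]
    refine ⟨f, ?_⟩
    ext g
    simp only [Finset.mem_filter, Finset.mem_singleton]
    constructor
    · rintro ⟨hgS, hgt⟩
      exact skey_inj (F := S) hgS hfS (by rw [hDS, hgt, hft])
    · rintro rfl; exact ⟨hfS, hft⟩
  have c1 := key1 F h1
  have c2 := key1 G h2
  have c3 := key1 H rfl
  have hfil : (H.filter fun f => skey D f = t) =
      symmDiff (F.filter fun f => skey D f = t) (G.filter fun f => skey D f = t) := by
    subst hH
    ext g
    simp only [Finset.mem_filter, Finset.mem_symmDiff]
    tauto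
  obtain ⟨a, ha⟩ := Finset.card_eq_one.mp c1
  obtain ⟨b, hb⟩ := Finset.card_eq_one.mp c2
  rw [hfil, ha, hb] at c3
  by_cases hab : a = b
  · subst hab
    simp [symmDiff_self] at c3
  · have hpair : (symmDiff {a} {b} : Finset (O → Bool)) = {a, b} := by
      ext g
      simp only [Finset.mem_symmDiff, Finset.mem_singleton, Finset.mem_insert]
      constructor
      · rintro (⟨rfl, -⟩ | ⟨rfl, -⟩) <;> simp
      · rintro (rfl | rfl)
        · exact Or.inl ⟨rfl, fun h => hab h⟩
        · exact Or.inr ⟨rfl, fun h => hab h.symm⟩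
    rw [hpair, Finset.card_insert_of_notMem (by simp [hab]), Finset.card_singleton] at c3
    omega

end StmtNineAux

/-- For every infinite cardinal `κ`, the Boolean group of cardinality
`2^κ` satisfies `B ↛ (2)_κ^FS`: there is a colouring with at most `κ` colours such that
for no distinct `x, y` is `{x, y, x+y}` monochromatic. -/
theorem stmt_9 (κ : Cardinal.{u}) (hκ : Cardinal.aleph0 ≤ κ)
    (B : Type u) [AddCommGroup B] (hB2 : ∀ x : B, x + x = 0)
    (hB : Cardinal.mk B = (2 : Cardinal.{u}) ^ κ) :
    ∃ (C : Type u) (c : B → C), Cardinal.mk C ≤ κ ∧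
      ∀ x y : B, x ≠ y → ¬ ∃ k, ∀ s ∈ ({x, y, x + y} : Set B), c s = k := by
  classical
  have h2 : ∀ x : B, (2 : ℕ) • x = 0 := fun x => by rw [two_nsmul]; exact hB2 x
  letI : Module (ZMod 2) B := AddCommGroup.zmodModule h2
  let b := Module.Basis.ofVectorSpace (ZMod 2) B
  haveI hOne : Nonempty κ.ord.ToType := by
    rw [Ordinal.toType_nonempty_iff_ne_zero]
    simp only [ne_eq, Cardinal.ord_eq_zero]
    rintro rfl
    exact (Cardinal.aleph0_pos.not_ge (by simpa using hκ))
  haveI hOinf : Infinite κ.ord.ToType :=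
    Cardinal.infinite_iff.mpr (by rw [Cardinal.mk_ord_toType]; exact hκ)
  have harrow : Cardinal.mk (κ.ord.ToType → Bool) = (2 : Cardinal.{u}) ^ κ := by
    rw [Cardinal.mk_arrow]
    simp [Cardinal.mk_ord_toType]
  have hle : Cardinal.mk (Module.Basis.ofVectorSpaceIndex (ZMod 2) B) ≤
      Cardinal.mk (κ.ord.ToType → Bool) := by
    rw [harrow, ← hB]
    exact Cardinal.mk_set_le _
  obtain ⟨e⟩ := Cardinal.le_def _ _ |>.mp hle
  let Fm : B → Finset (κ.ord.ToType → Bool) := fun x => (b.repr x).support.image e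
  refine ⟨Finset κ.ord.ToType × Finset (Finset κ.ord.ToType),
    fun x => scol (Fm x), ?_, ?_⟩
  · have hfo : Cardinal.mk (Finset κ.ord.ToType) = κ := by
      rw [Cardinal.mk_finset_of_infinite, Cardinal.mk_ord_toType]
    have hffo : Cardinal.mk (Finset (Finset κ.ord.ToType)) = κ := by
      rw [Cardinal.mk_finset_of_infinite, hfo]
    have : Cardinal.mk (Finset κ.ord.ToType × Finset (Finset κ.ord.ToType)) = κ * κ := by
      rw [Cardinal.mk_prod, hfo, hffo]
      simp
    rw [this, Cardinal.mul_eq_self hκ]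
  · rintro x y hxy ⟨k, hk⟩
    have hx := hk x (by simp)
    have hy := hk y (by simp)
    have hz := hk (x + y) (by simp)
    have hxy0 : x + y ≠ 0 := by
      intro h
      apply hxy
      have := congrArg (· + y) h
      simpa [add_assoc, hB2 y] using this
    have hsupp : (b.repr (x + y)).support = symmDiff (b.repr x).support (b.repr y).support := by
      rw [map_add]
      ext i
      simp only [Finsupp.mem_support_iff, Finset.mem_symmDiff, Finsupp.add_apply,
        Finsupp.mem_support_iff]
      generalize (b.repr x) i = p
      generalize (b.repr y) i = q
      revert p q
      decide
    have hHdef : Fm (x + y) = symmDiff (Fm x) (Fm y) := by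
      show ((b.repr (x + y)).support).image e = _
      rw [hsupp, Finset.image_symmDiff _ _ e.injective]
    have hHne : (Fm (x + y)).Nonempty := by
      apply Finset.Nonempty.image
      rw [Finsupp.support_nonempty_iff]
      intro h0
      exact hxy0 (by simpa using (b.repr.map_eq_zero_iff).mp h0)
    exact score (Fm x) (Fm y) (Fm (x + y)) hHdef hHne
      (hx.trans hz.symm) (hy.trans hz.symm)
end

section
/- Let λ be an uncountable cardinal and let B be a Boolean group of cardinality λ. Then the following are equivalent: (i) for every infinite cardinal κ < λ and every positive integer n, B → (n)_κ^FS, i.e., for every colouring c : B → C with |C| ≤ κ there exists X ⊆ B with |X| = n such that FS(X) is monochromatic for c; (ii) λ is a strong limit cardinal, i.e., 2^μ < λ for every cardinal μ < λ. -/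
/-!
(ii) ⇒ (i): `B` is an `𝔽₂`-vector space with a basis of size `λ`. Colour each `2^(n-1)`-set of
basis vectors by the colour of its sum; since `λ` is a strong limit, the Erdős–Rado theorem gives
a homogeneous set of `2^n` basis vectors, which we index by the cube `𝔽₂^n` as `e w`. The `n`
vectors `x j = ∑_{w j = 1} e w` work: for nonempty `G`, `∑_{j ∈ G} x j` is the sum of those
`e w` with `∑_{j ∈ G} w j = 1`, that is, of exactly `2^(n-1)` distinct homogeneous basis vectors.

(i) ⇒ (ii): if `λ ≤ 2^κ` with `κ < λ`, then `B` embeds linearly into `𝔽₂^κ`. Colour a vector by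
the least point of its support: for `a ≠ b` of the same colour `d`, `a + b` vanishes at `d`, so
`FS {a, b} = {a, b, a + b}` is never monochromatic.
-/

universe u

universe v w

open Cardinal Set

section FiniteSums

variable {G : Type*} [AddCommMonoid G]

theorem mem_FS_of_mem {X : Set G} {x : G} (hx : x ∈ X) : x ∈ FS X :=
  ⟨{x}, Finset.singleton_nonempty x, by simpa using hx, by simp⟩

theorem add_mem_FS_pair {x y : G} (h : x ≠ y) : x + y ∈ FS {x, y} := by
  classical
  exact ⟨{x, y}, Finset.insert_nonempty x {y}, by simp, by rw [Finset.sum_pair h]⟩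

theorem exists_finset_of_mem_FS_range {ι : Type*} {f : ι → G} (hf : Function.Injective f)
    {s : G} (hs : s ∈ FS (range f)) : ∃ J : Finset ι, J.Nonempty ∧ s = ∑ j ∈ J, f j := by
  classical
  obtain ⟨F, hF, hFf, rfl⟩ := hs
  rw [← image_univ] at hFf
  obtain ⟨J, -, rfl⟩ := Finset.subset_set_image_iff.mp hFf
  exact ⟨J, Finset.image_nonempty.mp hF, Finset.sum_image fun _ _ _ _ h => hf h⟩

end FiniteSums

/-- In arrow notation: `θ⁺ → (m)^r_κ`. -/
def RamseyBound (κ : Cardinal.{u}) (r m : ℕ) (θ : Cardinal.{u}) : Prop :=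
  ∀ (A : Type u), θ < #A → ∀ (C : Type u), #C ≤ κ → ∀ c : Finset A → C,
    ∃ X : Finset A, X.card = m ∧ ∃ k, ∀ Y ⊆ X, Y.card = r → c Y = k

theorem ramseyBound_zero (κ : Cardinal.{u}) (m : ℕ) {θ : Cardinal.{u}} (hθ : ℵ₀ ≤ θ) :
    RamseyBound κ 0 m θ := by
  intro A hA C _ c
  have : Infinite A := Cardinal.infinite_iff.mpr (hθ.trans hA.le)
  obtain ⟨X, hX⟩ := Infinite.exists_subset_card_eq A m
  exact ⟨X, hX, c ∅, fun Y _ hY => by rw [Finset.card_eq_zero.mp hY]⟩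

section Branch

variable {A C D : Type u} [DecidableEq A] [LinearOrder D] [WellFoundedLT D]

def RealizesTypeOver (c : Finset A → C) (S : Set A) (x y : A) : Prop :=
  y ∉ S ∧ ∀ R : Finset A, ↑R ⊆ S → c (insert y R) = c (insert x R)

/-- Each point of the branch of `x` realises the type of `x` over the earlier points. If the
branch never meets `x` it is end-homogeneous; if every branch meets its root, then `x` is
determined by that stage and the colours `c (insert x I)` along its branch, which bounds `#A`.
Choosing by `Classical.epsilon` makes each point depend only on the type, as `branch_eq_branch`
needs. -/
noncomputable def branch (c : Finset A → C) (x : A) : D → A :=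
  WellFoundedLT.fix fun _ ih =>
    @Classical.epsilon A ⟨x⟩ (RealizesTypeOver c {a | ∃ o' h, ih o' h = a} x)

variable (c : Finset A → C) (x : A)

theorem branch_apply (o : D) :
    branch c x o = @Classical.epsilon A ⟨x⟩ (RealizesTypeOver c (branch c x '' Iio o) x) := by
  rw [branch, WellFoundedLT.fix_eq]
  congr 3
  ext a
  simp

theorem branch_eq_branch {y : A} (h : ∀ I : Finset D,
      c (insert x (I.image (branch c x))) = c (insert y (I.image (branch c y)))) :
    (branch c x : D → A) = branch c y := by
  funext o
  induction o using WellFoundedLT.induction with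
  | _ o ih =>
    have hS : branch c x '' Iio o = branch c y '' Iio o := image_congr fun o' ho' => ih o' ho'
    rw [branch_apply, branch_apply, hS]
    congr 1
    funext z
    refine propext (and_congr_right fun _ => forall₂_congr fun R hR => ?_)
    obtain ⟨I, hI, rfl⟩ := Finset.subset_set_image_iff.mp hR
    rw [← h I, Finset.image_congr fun o' ho' => ih o' (hI ho')]

theorem branch_realizesTypeOver {o : D} (hx : ∀ o' < o, branch c x o' ≠ x) :
    RealizesTypeOver c (branch c x '' Iio o) x (branch c x o) := by
  rw [branch_apply]
  exact Classical.epsilon_spec ⟨x, fun ⟨o', ho', h⟩ => hx o' ho' h, fun _ _ => rfl⟩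

theorem branch_injective (hx : ∀ o : D, branch c x o ≠ x) :
    Function.Injective (branch c x : D → A) :=
  .of_lt_imp_ne fun o _ hlt heq =>
    (branch_realizesTypeOver c x fun o' _ => hx o').1 ⟨o, hlt, heq⟩

theorem mk_le_of_forall_exists_branch_eq (h : ∀ x : A, ∃ o : D, branch c x o = x) :
    #A ≤ #D * #C ^ #(Finset D) := by
  choose o ho using h
  have hinj : Function.Injective fun x =>
      (o x, fun I : Finset D => c (insert x (I.image (branch c x)))) := by
    intro x y hxy
    simp only [Prod.mk.injEq] at hxy
    rw [← ho x, ← ho y, hxy.1, branch_eq_branch c x (congrFun hxy.2)]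
  calc #A ≤ #(D × (Finset D → C)) := mk_le_of_injective hinj
    _ = #D * #C ^ #(Finset D) := by rw [mk_prod, lift_id, lift_id, power_def]

end Branch

theorem RamseyBound.two_pow_succ {κ θ : Cardinal.{u}} {r m : ℕ} (hκ : ℵ₀ ≤ κ) (hκθ : κ ≤ θ)
    (h : RamseyBound κ r m θ) : RamseyBound κ (r + 1) m (2 ^ Order.succ θ) := by
  classical
  intro A hA C hC c
  set σ := Order.succ θ
  have hσ : ℵ₀ ≤ σ := (hκ.trans hκθ).trans (Order.le_succ θ)
  let D := σ.ord.ToType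
  have hD : #D = σ := mk_ord_toType σ
  have : Infinite D := Cardinal.infinite_iff.mpr (hD ▸ hσ)
  have hcount : #D * #C ^ #(Finset D) ≤ 2 ^ σ :=
    calc #D * #C ^ #(Finset D) = σ * #C ^ σ := by rw [mk_finset_of_infinite, hD]
      _ ≤ 2 ^ σ * σ ^ σ := mul_le_mul' (cantor σ).le
          (power_le_power_right (hC.trans (hκθ.trans (Order.le_succ θ))))
      _ = 2 ^ σ := by rw [power_self_eq hσ, ← power_add, add_eq_self hσ]
  obtain ⟨x, hx⟩ : ∃ x, ∀ o : D, branch c x o ≠ x := by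
    by_contra! h
    exact (mk_le_of_forall_exists_branch_eq c h).not_gt (hcount.trans_lt hA)
  have hinj := branch_injective c x hx
  obtain ⟨X, hX, k, hk⟩ := h D (hD ▸ Order.lt_succ θ) C hC
    fun I => c (insert x (I.image (branch c x)))
  refine ⟨X.image (branch c x), by rw [Finset.card_image_of_injective _ hinj, hX], k, ?_⟩
  intro Y hY hYcard
  obtain ⟨J, hJX, rfl⟩ := Finset.subset_image_iff.mp hY
  rw [Finset.card_image_of_injective _ hinj] at hYcard
  have hJ : J.Nonempty := Finset.card_pos.mp (by omega)
  set o := J.max' hJ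
  have hJo : ↑((J.erase o).image (branch c x)) ⊆ branch c x '' Iio o := by
    rw [Finset.coe_image]
    exact image_mono fun o' ho' => J.lt_max'_of_mem_erase_max' hJ ho'
  rw [← Finset.insert_erase (J.max'_mem hJ), Finset.image_insert,
    (branch_realizesTypeOver c x fun o' _ => hx o').2 _ hJo]
  refine hk _ ((J.erase_subset o).trans hJX) ?_
  rw [Finset.card_erase_of_mem (J.max'_mem hJ)]
  omega

theorem exists_ramseyBound {κ lam : Cardinal.{u}} (hlam : IsStrongPrelimit lam) (hκ : ℵ₀ ≤ κ)
    (hκlam : κ < lam) (r m : ℕ) : ∃ θ < lam, κ ≤ θ ∧ RamseyBound κ r m θ := by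
  induction r with
  | zero => exact ⟨κ, hκlam, le_rfl, ramseyBound_zero κ m hκ⟩
  | succ r ih =>
    obtain ⟨θ, hθlam, hκθ, hθ⟩ := ih
    refine ⟨2 ^ Order.succ θ, ?_, ?_, hθ.two_pow_succ hκ hκθ⟩
    · exact hlam ((Order.succ_le_of_lt (cantor θ)).trans_lt (hlam hθlam))
    · exact hκθ.trans ((Order.le_succ θ).trans (cantor _).le)

theorem Module.rank_eq_mk_of_finite {K : Type v} {V : Type w} [DivisionRing K] [Finite K]
    [AddCommGroup V] [Module K V] [Infinite V] : Module.rank K V = #V := by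
  refine le_antisymm (rank_le_card K V) ?_
  let ι := Module.Free.ChooseBasisIndex K V
  let b := Module.Free.chooseBasis K V
  have : Infinite ι := by
    by_contra hfin
    rw [not_infinite_iff_finite] at hfin
    have := Module.Finite.of_basis b
    exact not_finite_iff_infinite.mpr ‹_› (Module.finite_of_finite K)
  have h : lift #V = lift #(ι →₀ K) := lift_mk_eq'.mpr ⟨b.repr⟩
  rw [mk_finsupp_lift_of_infinite, lift_max, lift_lift, lift_lift] at h
  have hK : lift.{w} #K ≤ lift.{max v w} #ι :=
    (lift_lt_aleph0.mpr (lt_aleph0_of_finite K)).le.trans (aleph0_le_lift.mpr (aleph0_le_mk ι))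
  rw [max_eq_left hK, lift_inj] at h
  rw [Module.Free.rank_eq_card_chooseBasisIndex, h]

theorem LinearIndependent.sum_ne_zero {ι R M : Type*} [Ring R] [Nontrivial R] [AddCommGroup M]
    [Module R M] {v : ι → M} (hv : LinearIndependent R v) {s : Finset ι} (hs : s.Nonempty) :
    ∑ i ∈ s, v i ≠ 0 := by
  intro h
  obtain ⟨i, hi⟩ := hs
  exact one_ne_zero (linearIndependent_iff'.mp hv s (fun _ => 1) (by simpa using h) i hi)

theorem card_filter_sum_eq_one {ι : Type*} [Fintype ι] [DecidableEq ι] {G : Finset ι}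
    (hG : G.Nonempty) : (Finset.univ.filter fun w : ι → ZMod 2 => ∑ j ∈ G, w j = 1).card =
      2 ^ (Fintype.card ι - 1) := by
  obtain ⟨j, hj⟩ := hG
  let f : (ι → ZMod 2) →+ ZMod 2 := ∑ i ∈ G, Pi.evalAddMonoidHom _ i
  have hf : ∀ w, f w = ∑ i ∈ G, w i := fun w => by simp [f]
  have hfiber : (Finset.univ.filter fun w => f w = 1).card =
      (Finset.univ.filter fun w => f w = 0).card :=
    AddMonoidHom.card_fiber_eq_of_mem_range f ⟨Pi.single j 1, by simp [hf, hj]⟩ ⟨0, map_zero f⟩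
  have htotal := Finset.card_filter_add_card_filter_not (s := Finset.univ) (fun w => f w = 1)
  have hne : ∀ a : ZMod 2, a ≠ 1 ↔ a = 0 := by decide
  simp only [hne, Finset.card_univ, Fintype.card_fun, ZMod.card] at htotal
  have : Nonempty ι := ⟨j⟩
  obtain ⟨d, hd⟩ := Nat.exists_eq_add_one_of_ne_zero (Fintype.card_ne_zero (α := ι))
  simp only [hf] at hfiber htotal
  rw [hd, pow_succ] at htotal
  rw [hd, Nat.add_sub_cancel]
  omega

section Cube

variable {V : Type*} [AddCommGroup V] [Module (ZMod 2) V] {n : ℕ}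

def cubeGen (v : (Fin n → ZMod 2) → V) (j : Fin n) : V := ∑ w, w j • v w

theorem sum_cubeGen (v : (Fin n → ZMod 2) → V) (G : Finset (Fin n)) :
    ∑ j ∈ G, cubeGen v j = ∑ w with ∑ j ∈ G, w j = 1, v w := by
  have hsmul : ∀ (a : ZMod 2) (x : V), a • x = if a = 1 then x else 0 := by
    intro a x
    rcases (by decide : ∀ a : ZMod 2, a = 0 ∨ a = 1) a with rfl | rfl <;> simp
  simp only [cubeGen]
  rw [Finset.sum_comm, Finset.sum_filter]
  exact Finset.sum_congr rfl fun w _ => by rw [← Finset.sum_smul, hsmul]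

theorem cubeGen_injective {v : (Fin n → ZMod 2) → V} (hv : LinearIndependent (ZMod 2) v) :
    Function.Injective (cubeGen v) := by
  intro j j' h
  by_contra hne
  have hG : ({j, j'} : Finset (Fin n)).Nonempty := Finset.insert_nonempty _ _
  apply hv.sum_ne_zero (s := {w | ∑ i ∈ {j, j'}, w i = 1})
  · exact Finset.card_pos.mp (by rw [card_filter_sum_eq_one hG]; positivity)
  · rw [← sum_cubeGen, Finset.sum_pair hne, h, ZModModule.add_self]

end Cube

theorem exists_ncard_eq_FS_monochromatic_of_ramseyBound {B C : Type u} [AddCommGroup B]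
    [Module (ZMod 2) B] {κ θ : Cardinal.{u}} {n : ℕ}
    (h : RamseyBound κ (2 ^ (n - 1)) (2 ^ n) θ) (hθ : θ < Module.rank (ZMod 2) B)
    (c : B → C) (hC : #C ≤ κ) : ∃ X : Set B, X.ncard = n ∧ ∃ k, ∀ s ∈ FS X, c s = k := by
  classical
  let b := Module.Free.chooseBasis (ZMod 2) B
  obtain ⟨I, hI, k, hk⟩ := h _ (Module.Free.rank_eq_card_chooseBasisIndex (ZMod 2) B ▸ hθ) C hC
    fun I => c (∑ i ∈ I, b i)
  let ε : (Fin n → ZMod 2) ≃ I := Fintype.equivOfCardEq (by simp [hI])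
  let e := ε.toEmbedding.trans (Function.Embedding.subtype (· ∈ I))
  have hv : LinearIndependent (ZMod 2) fun w => b (e w) := b.linearIndependent.comp e e.injective
  refine ⟨range (cubeGen fun w => b (e w)), ?_, k, fun s hs => ?_⟩
  · rw [ncard_range_of_injective (cubeGen_injective hv), Nat.card_eq_fintype_card,
      Fintype.card_fin]
  obtain ⟨G, hG, rfl⟩ := exists_finset_of_mem_FS_range (cubeGen_injective hv) hs
  rw [sum_cubeGen, ← Finset.sum_map _ e]
  refine hk _ ?_ ?_
  · intro i hi
    obtain ⟨w, -, rfl⟩ := Finset.mem_map.mp hi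
    exact (ε w).2
  · rw [Finset.card_map, card_filter_sum_eq_one hG, Fintype.card_fin]

section LeastSupport

variable {D M : Type*} [LinearOrder D] [WellFoundedLT D] [Zero M]

open Classical in
noncomputable def leastSupport (v : D → M) : WithTop D :=
  if h : {d | v d ≠ 0}.Nonempty then (wellFounded_lt.min {d | v d ≠ 0} h : D) else ⊤

theorem leastSupport_eq_top {v : D → M} : leastSupport v = ⊤ ↔ v = 0 := by
  unfold leastSupport
  split_ifs with h
  · simpa [funext_iff, Set.Nonempty] using h
  · simpa [funext_iff, Set.Nonempty] using h

theorem apply_ne_zero_of_leastSupport_eq {v : D → M} {d : D} (h : leastSupport v = d) :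
    v d ≠ 0 := by
  unfold leastSupport at h
  split_ifs at h with hv
  · rw [← WithTop.coe_inj.mp h]
    exact wellFounded_lt.min_mem {d | v d ≠ 0} hv
  · exact absurd h WithTop.top_ne_coe

theorem leastSupport_add_ne {v w : D → ZMod 2} (hvw : v ≠ w)
    (h : leastSupport v = leastSupport w) : leastSupport (v + w) ≠ leastSupport v := by
  obtain ⟨d, hd⟩ := WithTop.ne_top_iff_exists.mp fun htop =>
    hvw ((leastSupport_eq_top.mp htop).trans (leastSupport_eq_top.mp (h ▸ htop)).symm)
  have hvd := apply_ne_zero_of_leastSupport_eq hd.symm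
  have hwd := apply_ne_zero_of_leastSupport_eq (hd.trans h).symm
  intro hsum
  apply apply_ne_zero_of_leastSupport_eq (hsum.trans hd.symm)
  exact (by decide : ∀ a b : ZMod 2, a ≠ 0 → b ≠ 0 → a + b = 0) _ _ hvd hwd

end LeastSupport

theorem exists_coloring_forall_not_FS_monochromatic {B : Type u} [AddCommGroup B]
    [Module (ZMod 2) B] {κ : Cardinal.{u}} (hκ : ℵ₀ ≤ κ) (hB : #B ≤ 2 ^ κ) :
    ∃ (C : Type u) (c : B → C), #C ≤ κ ∧
      ∀ X : Set B, X.ncard = 2 → ¬ ∃ k, ∀ s ∈ FS X, c s = k := by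
  let D := κ.ord.ToType
  have hD : #D = κ := mk_ord_toType κ
  have : Infinite D := Cardinal.infinite_iff.mpr (hD ▸ hκ)
  obtain ⟨f, hf⟩ : ∃ f : B →ₗ[ZMod 2] (D → ZMod 2), Function.Injective f :=
    rank_le_iff_exists_linearMap.mp <| (rank_le_card _ _).trans <| by
      rw [rank_fun_infinite]
      simpa [hD] using hB
  refine ⟨WithTop D, fun x => leastSupport (f x), ?_, fun X hX ⟨k, hk⟩ => ?_⟩
  · exact (mk_option (α := D)).trans_le (by rw [hD, add_one_eq hκ])
  obtain ⟨a, b, hab, rfl⟩ := ncard_eq_two.mp hX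
  have ha := hk a (mem_FS_of_mem (mem_insert a {b}))
  have hb := hk b (mem_FS_of_mem (mem_insert_of_mem a rfl))
  apply leastSupport_add_ne (hf.ne hab) (ha.trans hb.symm)
  rw [← map_add]
  exact (hk _ (add_mem_FS_pair hab)).trans ha.symm

/-- For an uncountable cardinal `λ` and a Boolean group `B` of
cardinality `λ`, we have `B → (n)_κ^FS` for all infinite `κ < λ` and all positive `n`
if and only if `λ` is a strong limit cardinal. -/
theorem stmt_10 (lam : Cardinal.{u}) (hlam : Cardinal.aleph0 < lam)
    (B : Type u) [AddCommGroup B] (hB2 : ∀ x : B, x + x = 0)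
    (hB : Cardinal.mk B = lam) :
    (∀ κ : Cardinal.{u}, Cardinal.aleph0 ≤ κ → κ < lam → ∀ n : ℕ, 0 < n →
      ∀ (C : Type u) (c : B → C), Cardinal.mk C ≤ κ →
        ∃ X : Set B, X.ncard = n ∧ ∃ k, ∀ s ∈ FS X, c s = k) ↔
    (∀ μ : Cardinal.{u}, μ < lam → (2 : Cardinal.{u}) ^ μ < lam) := by
  let _ : Module (ZMod 2) B := AddCommGroup.zmodModule fun x => by rw [two_nsmul, hB2]
  have : Infinite B := Cardinal.infinite_iff.mpr (hB ▸ hlam.le)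
  have hrank : Module.rank (ZMod 2) B = lam := by rw [Module.rank_eq_mk_of_finite, hB]
  constructor
  · intro h μ hμ
    by_contra! hle
    have hκ : ℵ₀ ≤ max μ ℵ₀ := le_max_right _ _
    obtain ⟨C, c, hC, hc⟩ := exists_coloring_forall_not_FS_monochromatic hκ
      (hB ▸ hle.trans (power_le_power_left two_ne_zero (le_max_left _ _)))
    obtain ⟨X, hX, hmono⟩ := h _ hκ (max_lt hμ hlam) 2 two_pos C c hC
    exact hc X hX hmono
  · intro h κ hκ hκlam n _ C c hC
    obtain ⟨θ, hθ, -, hR⟩ := exists_ramseyBound h hκ hκlam (2 ^ (n - 1)) (2 ^ n)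
    exact exists_ncard_eq_FS_monochromatic_of_ramseyBound hR (hrank ▸ hθ) c hC
end

section
/- Let G be an infinite abelian group with no elements of order 2 (that is, x + x = 0 implies x = 0). Then there exists a colouring c : G → ℕ such that for no a, b ∈ G with b ≠ 0 is the set {a, a + b, a + 2b} monochromatic for c; in other words, no nontrivial 3-term arithmetic progression in G is monochromatic. -/
/-!
Call a set colourable when it is a countable union of 3AP-free sets. For `f : G →+ H`, if
`f '' s` and `ker f` are colourable then so is `s`: colour `x` by the colour of `f x` together
with that of `x - r x`, where `r x ∈ x + ker f` depends only on `f x`. The map into the divisible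
hull, a `ℚ`-vector space, has torsion kernel. The torsion subgroup is the union of the kernels of
`n • ·`, and multiplication by `a` splits the kernel of `(a * b) • ·` into those of `a • ·` and
`b • ·`, down to `𝔽_q`-vector spaces for primes `q`.

A vector space with no `2`-torsion over a countable division ring is coloured, through a
well-ordered basis, by the list of its nonzero coordinates in increasing order (Ceder). If
`x + z = 2 y` and the three lists agree, then reading them from the smallest index, any two of
`x i, y i, z i` that are nonzero must be equal, and without `2`-torsion this forces
`x i = y i = z i`.
-/

open Set Function

section Colorable

variable {G H : Type*} [AddCommGroup G] [AddCommGroup H] {s t : Set G}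

def ThreeAPFreeColorable (s : Set G) : Prop :=
  ∃ c : G → ℕ, ∀ n, ThreeAPFree (s ∩ c ⁻¹' {n})

theorem threeAPFreeColorable_of_countable {X : Type*} [Countable X] (c : G → X)
    (hc : ∀ k, ThreeAPFree (s ∩ c ⁻¹' {k})) : ThreeAPFreeColorable s := by
  obtain ⟨e, he⟩ := Countable.exists_injective_nat X
  exact ⟨e ∘ c, fun _ x hx y hy z hz => hc (c x) ⟨hx.1, rfl⟩ ⟨hy.1, he (hy.2.trans hx.2.symm)⟩
    ⟨hz.1, he (hz.2.trans hx.2.symm)⟩⟩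

theorem ThreeAPFreeColorable.mono (h : s ⊆ t) (ht : ThreeAPFreeColorable t) :
    ThreeAPFreeColorable s :=
  let ⟨c, hc⟩ := ht
  ⟨c, fun n => (hc n).mono (inter_subset_inter_left _ h)⟩

theorem Set.Subsingleton.threeAPFreeColorable (hs : s.Subsingleton) : ThreeAPFreeColorable s :=
  ⟨0, fun _ => (hs.anti inter_subset_left).threeAPFree⟩

theorem ThreeAPFreeColorable.image {f : G →+ H} (hf : Injective f)
    (hs : ThreeAPFreeColorable s) : ThreeAPFreeColorable (f '' s) := by
  obtain ⟨c, hc⟩ := hs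
  refine ⟨c ∘ invFun f, fun n => ?_⟩
  rw [← image_inter_preimage, ← preimage_comp, comp_assoc, invFun_comp hf, comp_id]
  exact (hc n).image' f hf.injOn

theorem ThreeAPFreeColorable.iUnion {s : ℕ → Set G} (hs : ∀ n, ThreeAPFreeColorable (s n)) :
    ThreeAPFreeColorable (⋃ n, s n) := by
  choose c hc using hs
  let idx : G → ℕ := fun x => Classical.epsilon (x ∈ s ·)
  refine threeAPFreeColorable_of_countable (fun x => (idx x, c (idx x) x))
    fun ⟨n, k⟩ => (hc n k).mono ?_
  rintro x ⟨hx, hxk⟩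
  obtain ⟨rfl, hk⟩ := Prod.mk.inj hxk
  exact ⟨Classical.epsilon_spec (mem_iUnion.1 hx), hk⟩

theorem ThreeAPFreeColorable.of_image_of_ker (f : G →+ H)
    (himage : ThreeAPFreeColorable (f '' s)) (hker : ThreeAPFreeColorable (f.ker : Set G)) :
    ThreeAPFreeColorable s := by
  obtain ⟨c₁, hc₁⟩ := himage
  obtain ⟨c₂, hc₂⟩ := hker
  let r : G → G := fun x => invFun f (f x)
  have hr : ∀ x, x - r x ∈ f.ker := fun x => by
    simp [r, invFun_eq (⟨x, rfl⟩ : ∃ y, f y = f x)]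
  refine threeAPFreeColorable_of_countable (fun x => (c₁ (f x), c₂ (x - r x)))
    fun ⟨m, n⟩ x hx y hy z hz hxyz => ?_
  simp only [mem_inter_iff, mem_preimage, mem_singleton_iff, Prod.mk.injEq] at hx hy hz
  have hfxy : f x = f y := hc₁ m ⟨mem_image_of_mem f hx.1, hx.2.1⟩
    ⟨mem_image_of_mem f hy.1, hy.2.1⟩ ⟨mem_image_of_mem f hz.1, hz.2.1⟩
    (by rw [← map_add, ← map_add, hxyz])
  have hfzy : f z = f y := by
    have := congrArg f hxyz
    rwa [map_add, map_add, hfxy, add_right_inj] at this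
  have hAP : (x - r x) + (z - r z) = (y - r y) + (y - r y) := by
    simp only [r, hfxy, hfzy]
    rw [sub_add_sub_comm, sub_add_sub_comm, hxyz]
  have := hc₂ n ⟨hr x, hx.2.2⟩ ⟨hr y, hy.2.2⟩ ⟨hr z, hz.2.2⟩ hAP
  simpa [r, hfxy] using this

end Colorable

theorem Finset.filter_sort {α : Type*} [LinearOrder α] (s : Finset α) (p : α → Prop)
    [DecidablePred p] : s.sort.filter (fun a => decide (p a)) = (s.filter p).sort := by
  refine List.Perm.eq_of_pairwise' ((s.pairwise_sort _).filter _)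
    ((s.filter p).pairwise_sort _) ?_
  rw [← Multiset.coe_eq_coe, ← Multiset.filter_coe, Finset.sort_eq, Finset.sort_eq]
  rfl

section Ceder

variable {A : Type*} [AddCommGroup A]

theorem eq_and_eq_of_add_eq_add_self (h2 : ∀ a : A, a + a = 0 → a = 0) {u v w : A}
    (h : u + w = v + v) (huv : u ≠ 0 → v ≠ 0 → u = v) (hwv : w ≠ 0 → v ≠ 0 → w = v)
    (huw : u ≠ 0 → w ≠ 0 → u = w) : u = v ∧ w = v := by
  grind

theorem List.forall_eq_of_filter_map_eq [DecidableEq A] {ι : Type*}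
    (h2 : ∀ a : A, a + a = 0 → a = 0) {x y z : ι → A} (h : ∀ i, x i + z i = y i + y i) :
    ∀ L : List ι, (L.map x).filter (· ≠ 0) = (L.map y).filter (· ≠ 0) →
      (L.map z).filter (· ≠ 0) = (L.map y).filter (· ≠ 0) → ∀ i ∈ L, x i = y i := by
  intro L
  induction L with
  | nil => simp
  | cons i L ih =>
    intro hxy hzy
    have head {u v : ι → A}
        (huv : ((i :: L).map u).filter (· ≠ 0) = ((i :: L).map v).filter (· ≠ 0))
        (hu : u i ≠ 0) (hv : v i ≠ 0) : u i = v i := by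
      rw [map_cons, map_cons, filter_cons_of_pos (by simpa using hu),
        filter_cons_of_pos (by simpa using hv)] at huv
      exact (cons_eq_cons.1 huv).1
    obtain ⟨hxi, hzi⟩ := eq_and_eq_of_add_eq_add_self h2 (h i) (head hxy) (head hzy)
      (head (hxy.trans hzy.symm))
    have tail {u : ι → A} (hu : u i = y i)
        (huy : ((i :: L).map u).filter (· ≠ 0) = ((i :: L).map y).filter (· ≠ 0)) :
        (L.map u).filter (· ≠ 0) = (L.map y).filter (· ≠ 0) := by
      by_cases hy : y i = 0
      · rwa [map_cons, map_cons, filter_cons_of_neg (by simpa [hu] using hy),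
          filter_cons_of_neg (by simpa using hy)] at huy
      · rw [map_cons, map_cons, filter_cons_of_pos (by simpa [hu] using hy),
          filter_cons_of_pos (by simpa using hy)] at huy
        exact (cons_eq_cons.1 huy).2
    rintro j (_ | ⟨_, hj⟩)
    · exact hxi
    · exact ih (tail hxi hxy) (tail hzi hzy) j hj

variable {ι : Type*} [LinearOrder ι]

def Finsupp.sortedValues (x : ι →₀ A) : List A := x.support.sort.map x

theorem Finsupp.sortedValues_eq_filter [DecidableEq A] {x : ι →₀ A} {U : Finset ι}
    (hU : x.support ⊆ U) : x.sortedValues = (U.sort.map x).filter (· ≠ 0) := by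
  have hsupport : U.filter (x · ≠ 0) = x.support := by
    ext i
    simp only [Finset.mem_filter, Finsupp.mem_support_iff, and_iff_right_iff_imp]
    exact fun hi => hU (Finsupp.mem_support_iff.2 hi)
  rw [List.filter_map, sortedValues, ← hsupport, ← Finset.filter_sort]
  rfl

theorem Finsupp.threeAPFree_sortedValues_preimage (h2 : ∀ a : A, a + a = 0 → a = 0)
    (l : List A) : ThreeAPFree (sortedValues ⁻¹' {l} : Set (ι →₀ A)) := by
  classical
  intro x hx y hy z hz hxyz
  let U := x.support ∪ y.support ∪ z.support
  have hsorted {w : ι →₀ A} (hw : w.support ⊆ U) (hwl : w ∈ sortedValues ⁻¹' {l}) :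
      (U.sort.map w).filter (· ≠ 0) = l := by
    rw [← sortedValues_eq_filter hw]; exact hwl
  have hxU : x.support ⊆ U := Finset.subset_union_left.trans Finset.subset_union_left
  have hyU : y.support ⊆ U := Finset.subset_union_right.trans Finset.subset_union_left
  have hzU : z.support ⊆ U := Finset.subset_union_right
  have hU := List.forall_eq_of_filter_map_eq h2
    (fun i => by simpa using DFunLike.congr_fun hxyz i) U.sort
    ((hsorted hxU hx).trans (hsorted hyU hy).symm)
    ((hsorted hzU hz).trans (hsorted hyU hy).symm)
  ext i
  by_cases hi : i ∈ U
  · exact hU i (Finset.mem_sort _ |>.2 hi)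
  · rw [Finsupp.notMem_support_iff.1 fun h => hi (hxU h),
      Finsupp.notMem_support_iff.1 fun h => hi (hyU h)]

theorem threeAPFreeColorable_univ_finsupp [Countable A] (h2 : ∀ a : A, a + a = 0 → a = 0) :
    ThreeAPFreeColorable (univ : Set (ι →₀ A)) :=
  threeAPFreeColorable_of_countable Finsupp.sortedValues fun l =>
    (Finsupp.threeAPFree_sortedValues_preimage h2 l).mono inter_subset_right

end Ceder

theorem threeAPFreeColorable_univ_of_module {K V : Type*} [DivisionRing K] [Countable K]
    [AddCommGroup V] [Module K V] (h2 : ∀ v : V, v + v = 0 → v = 0) :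
    ThreeAPFreeColorable (univ : Set V) := by
  rcases subsingleton_or_nontrivial V with _ | _
  · exact subsingleton_univ.threeAPFreeColorable
  obtain ⟨v, hv⟩ := exists_ne (0 : V)
  have hK (a : K) (ha : a + a = 0) : a = 0 :=
    (smul_eq_zero.1 (h2 _ (by rw [← add_smul, ha, zero_smul]))).resolve_right hv
  let _ : LinearOrder (Module.Basis.ofVectorSpaceIndex K V) :=
    IsWellOrder.linearOrder WellOrderingRel
  let e := (Module.Basis.ofVectorSpace K V).repr.symm
  have := (threeAPFreeColorable_univ_finsupp hK).image (f := e.toAddMonoidHom) e.injective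
  simpa [image_univ_of_surjective e.surjective] using this

section Torsion

variable {G : Type*} [AddCommGroup G]

theorem threeAPFreeColorable_ker_nsmul (h2 : ∀ x : G, x + x = 0 → x = 0) {n : ℕ} (hn : n ≠ 0) :
    ThreeAPFreeColorable ((nsmulAddMonoidHom n : G →+ G).ker : Set G) := by
  induction n using Nat.recOnMul with
  | zero => exact absurd rfl hn
  | one =>
    refine Set.Subsingleton.threeAPFreeColorable fun x hx y hy => ?_
    simp_all
  | prime q hq =>
    have := Fact.mk hq
    let T := (nsmulAddMonoidHom q : G →+ G).ker
    let _ : Module (ZMod q) T := AddCommGroup.zmodModule fun x => Subtype.ext x.2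
    have := (threeAPFreeColorable_univ_of_module (K := ZMod q) (V := T)
      fun x hx => Subtype.ext (h2 _ (congrArg Subtype.val hx))).image
      (f := T.subtype) Subtype.val_injective
    simpa using this
  | mul a b ha hb =>
    refine ThreeAPFreeColorable.of_image_of_ker (nsmulAddMonoidHom a)
      ((hb (right_ne_zero_of_mul hn)).mono ?_) (ha (left_ne_zero_of_mul hn))
    rintro _ ⟨x, hx, rfl⟩
    simpa [mul_nsmul] using hx

theorem threeAPFreeColorable_torsion (h2 : ∀ x : G, x + x = 0 → x = 0) :
    ThreeAPFreeColorable (AddCommGroup.torsion G : Set G) := by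
  refine (ThreeAPFreeColorable.iUnion fun n =>
    threeAPFreeColorable_ker_nsmul h2 n.succ_ne_zero).mono fun x hx => ?_
  obtain ⟨n, hn, hnx⟩ := isOfFinAddOrder_iff_nsmul_eq_zero.1 hx
  exact mem_iUnion.2 ⟨n - 1, by simpa [Nat.sub_add_cancel hn] using hnx⟩

end Torsion

theorem DivisibleHull.isOfFinAddOrder_of_coe_eq_zero {M : Type*} [AddCommMonoid M] {m : M}
    (h : (m : DivisibleHull M) = 0) : IsOfFinAddOrder m := by
  rw [← mk_zero 1, mk_eq_mk] at h
  obtain ⟨u, hu⟩ := h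
  exact isOfFinAddOrder_iff_nsmul_eq_zero.2 ⟨u, u.pos, by simpa using hu⟩

theorem threeAPFreeColorable_univ {G : Type*} [AddCommGroup G]
    (h2 : ∀ x : G, x + x = 0 → x = 0) : ThreeAPFreeColorable (univ : Set G) := by
  have hHull (v : DivisibleHull G) (hv : v + v = 0) : v = 0 := by
    rw [← two_smul ℚ] at hv
    exact (smul_eq_zero.1 hv).resolve_left two_ne_zero
  refine ThreeAPFreeColorable.of_image_of_ker (DivisibleHull.coeAddMonoidHom G)
    ((threeAPFreeColorable_univ_of_module (K := ℚ) hHull).mono (subset_univ _))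
    ((threeAPFreeColorable_torsion h2).mono fun x hx => ?_)
  exact DivisibleHull.isOfFinAddOrder_of_coe_eq_zero hx

theorem stmt_13_general (G : Type*) [AddCommGroup G]
    (h2 : ∀ x : G, x + x = 0 → x = 0) :
    ∃ c : G → ℕ, ∀ a b : G, b ≠ 0 →
      ¬ ∃ k, ∀ s ∈ ({a, a + b, a + 2 • b} : Set G), c s = k := by
  obtain ⟨c, hc⟩ := threeAPFreeColorable_univ h2
  refine ⟨c, fun a b hb ⟨k, hk⟩ => hb ?_⟩
  have hAP : a + (a + 2 • b) = (a + b) + (a + b) := by rw [two_nsmul]; abel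
  have := hc k ⟨trivial, hk a (by simp)⟩ ⟨trivial, hk (a + b) (by simp)⟩
    ⟨trivial, hk (a + 2 • b) (by simp)⟩ hAP
  simpa using this

/-- If `G` is an infinite abelian group with no elements of order `2`,
then there is a colouring `c : G → ℕ` such that no nontrivial `3`-term arithmetic
progression `{a, a+b, a+2b}` (with `b ≠ 0`) is monochromatic. -/
theorem stmt_13 (G : Type*) [AddCommGroup G] [Infinite G]
    (h2 : ∀ x : G, x + x = 0 → x = 0) :
    ∃ c : G → ℕ, ∀ a b : G, b ≠ 0 →
      ¬ ∃ k, ∀ s ∈ ({a, a + b, a + 2 • b} : Set G), c s = k :=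
  stmt_13_general G h2
end

section
/- Let G be an abelian group with no elements of order 2 (that is, x + x = 0 implies x = 0). Then G ↛ (1)_2^{⟨·⟩}: there exists a colouring c : G → {0,1} such that for no nontrivial subgroup H ⊆ G (i.e., H ≠ {0}) is the set H \ {0} monochromatic for c. -/
/-!
Negation is a fixed-point-free involution of `G \ {0}`, so `G` can be coloured with two colours
so that `x` and `-x` always get different colours: order `G` linearly and colour `x` by whether
`x < -x`. Every nontrivial subgroup contains some `x ≠ 0` together with `-x`.
-/

theorem Function.Involutive.exists_fin_two_coloring_ne {α : Type*} {f : α → α}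
    (hf : Function.Involutive f) : ∃ c : α → Fin 2, ∀ x, f x ≠ x → c (f x) ≠ c x := by
  let _ : LinearOrder α := IsWellOrder.linearOrder WellOrderingRel
  refine ⟨fun x => if x < f x then 0 else 1, fun x hx => ?_⟩
  rcases hx.lt_or_gt with hlt | hgt
  · simp only [hf x, hlt, hlt.not_gt]
    decide
  · simp [hf x, hgt, hgt.le]

theorem exists_fin_two_coloring_neg_ne {G : Type*} [AddGroup G]
    (h2 : ∀ x : G, x + x = 0 → x = 0) : ∃ c : G → Fin 2, ∀ x, x ≠ 0 → c (-x) ≠ c x := by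
  obtain ⟨c, hc⟩ := (neg_involutive (G := G)).exists_fin_two_coloring_ne
  exact ⟨c, fun x hx => hc x fun h => hx (h2 x (neg_eq_iff_add_eq_zero.mp h))⟩

/-- If `G` is an abelian group with no elements of order `2`, then
`G ↛ (1)_2^⟨·⟩`: there is a colouring `c : G → {0,1}` such that for no nontrivial
subgroup `H ⊆ G` is `H \ {0}` monochromatic. -/
theorem stmt_14 (G : Type*) [AddCommGroup G] (h2 : ∀ x : G, x + x = 0 → x = 0) :
    ∃ c : G → Fin 2, ∀ H : AddSubgroup G, H ≠ ⊥ →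
      ¬ ∃ k, ∀ x ∈ H, x ≠ 0 → c x = k := by
  obtain ⟨c, hc⟩ := exists_fin_two_coloring_neg_ne h2
  refine ⟨c, fun H hH ⟨k, hk⟩ => ?_⟩
  obtain ⟨x, hxH, hx⟩ := H.bot_or_exists_ne_zero.resolve_left hH
  exact hc x hx ((hk (-x) (H.neg_mem hxH) (neg_ne_zero.mpr hx)).trans (hk x hxH hx).symm)
end

section
/- Let R be a unique factorization domain which is not the two-element field 𝔽₂, and let M be a free R-module. Then M ↛ (1)_2^Span: there exists a colouring c : M → {0,1} such that for no nonzero submodule N ⊆ M is the set N \ {0} monochromatic for c. -/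
/-!
Well-order a basis of `M` and colour a vector by a colouring `f` of `R` evaluated at its leading
coefficient. Since the leading coefficient of `s • x` is `s` times that of `x`, it suffices that
every nonzero `a : R` has a nonzero multiple `s * a` with `f (s * a) ≠ f a`. If every nonzero
element of `R` is a unit, take `f a = [a = 1]` and use some `u ∉ {0, 1}`, which exists because
`R ≠ 𝔽₂`; otherwise `R` has a prime `p`, and the parity of the multiplicity of `p` changes when
multiplying by `p`.
-/

def SplitsLines (R : Type*) {M α : Type*} [Zero M] [SMul R M] (c : M → α) : Prop :=
  ∀ x : M, x ≠ 0 → ∃ s : R, s • x ≠ 0 ∧ c (s • x) ≠ c x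

theorem SplitsLines.not_exists_forall_eq {R M α : Type*} [Semiring R] [AddCommMonoid M]
    [Module R M] {c : M → α} (hc : SplitsLines R c) {N : Submodule R M} (hN : N ≠ ⊥) :
    ¬ ∃ k, ∀ x ∈ N, x ≠ 0 → c x = k := by
  rintro ⟨k, hk⟩
  obtain ⟨x, hxN, hx⟩ := N.ne_bot_iff.mp hN
  obtain ⟨s, hs, hne⟩ := hc x hx
  exact hne ((hk _ (N.smul_mem s hxN) hs).trans (hk x hxN hx).symm)

namespace Module.Basis

variable {ι R M : Type*} [LinearOrder ι] [Semiring R] [AddCommMonoid M] [Module R M]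

noncomputable def leadingCoeff (b : Basis ι R M) (x : M) : R :=
  if h : (b.repr x).support.Nonempty then b.repr x ((b.repr x).support.max' h) else 0

theorem leadingCoeff_ne_zero (b : Basis ι R M) {x : M} (hx : x ≠ 0) : b.leadingCoeff x ≠ 0 := by
  have h : (b.repr x).support.Nonempty :=
    Finsupp.support_nonempty_iff.mpr (b.repr.map_ne_zero_iff.mpr hx)
  rw [leadingCoeff, dif_pos h]
  exact Finsupp.mem_support_iff.mp ((b.repr x).support.max'_mem h)

theorem leadingCoeff_smul [IsDomain R] (b : Basis ι R M) {r : R} (hr : r ≠ 0) (x : M) :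
    b.leadingCoeff (r • x) = r * b.leadingCoeff x := by
  simp only [leadingCoeff, map_smul, Finsupp.support_smul_eq hr]
  split_ifs <;> simp

theorem splitsLines_comp_leadingCoeff [IsDomain R] (b : Basis ι R M) {α : Type*} {f : R → α}
    (hf : SplitsLines R f) : SplitsLines R (f ∘ b.leadingCoeff) := by
  intro x hx
  obtain ⟨s, hs, hfs⟩ := hf _ (b.leadingCoeff_ne_zero hx)
  have hlc : b.leadingCoeff (s • x) = s • b.leadingCoeff x :=
    b.leadingCoeff_smul (left_ne_zero_of_mul hs) x
  refine ⟨s, fun h => hs ?_, by simpa only [Function.comp_apply, hlc] using hfs⟩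
  rw [← hlc, h, leadingCoeff, dif_neg (by simp)]

end Module.Basis

theorem exists_ne_zero_ne_one_of_not_ringEquiv_zmod_two {R : Type*} [Ring R] [Nontrivial R]
    (hR : ¬ Nonempty (R ≃+* ZMod 2)) : ∃ u : R, u ≠ 0 ∧ u ≠ 1 := by
  classical
  by_contra! h
  let _ : Fintype R := ⟨{0, 1}, fun x => by by_cases hx : x = 0 <;> simp [hx, h x]⟩
  have hcard : Fintype.card R = 2 := Finset.card_pair zero_ne_one
  exact hR ⟨(ZMod.ringEquivOfPrime R Nat.prime_two hcard).symm⟩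

theorem splitsLines_ite_eq_one {R : Type*} [MonoidWithZero R] [Nontrivial R] [DecidableEq R]
    (hunit : ∀ a : R, a ≠ 0 → IsUnit a) {u : R} (hu0 : u ≠ 0) (hu1 : u ≠ 1) :
    SplitsLines R (fun a : R => if a = 1 then (0 : Fin 2) else 1) := by
  intro a ha
  by_cases ha1 : a = 1
  · exact ⟨u, by simpa [ha1] using hu0, by simp [ha1, hu1]⟩
  · obtain ⟨s, hs⟩ := (hunit a ha).exists_left_inv
    exact ⟨s, by simp [hs], by simp [hs, ha1]⟩

theorem splitsLines_multiplicity {R : Type*} [CommMonoidWithZero R] [IsCancelMulZero R]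
    [WfDvdMonoid R] {p : R} (hp : Prime p) :
    SplitsLines R (fun a : R => if Even (multiplicity p a) then (0 : Fin 2) else 1) := by
  intro a ha
  have hpa : p * a ≠ 0 := mul_ne_zero hp.ne_zero ha
  have hmul : multiplicity p (p * a) = multiplicity p a + 1 := by
    rw [multiplicity_mul hp (FiniteMultiplicity.of_prime_left hp hpa), multiplicity_self,
      add_comm]
  refine ⟨p, hpa, ?_⟩
  by_cases h : Even (multiplicity p a) <;> simp [hmul, h, Nat.even_add_one]

theorem exists_splitsLines_fin_two {R : Type*} [CommRing R] [IsDomain R]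
    [UniqueFactorizationMonoid R] (hR : ¬ Nonempty (R ≃+* ZMod 2)) :
    ∃ f : R → Fin 2, SplitsLines R f := by
  classical
  by_cases hunit : ∀ a : R, a ≠ 0 → IsUnit a
  · obtain ⟨u, hu0, hu1⟩ := exists_ne_zero_ne_one_of_not_ringEquiv_zmod_two hR
    exact ⟨_, splitsLines_ite_eq_one hunit hu0 hu1⟩
  · push Not at hunit
    obtain ⟨a, ha0, hau⟩ := hunit
    obtain ⟨p, hp, -⟩ := WfDvdMonoid.exists_irreducible_factor hau ha0
    exact ⟨_, splitsLines_multiplicity (UniqueFactorizationMonoid.irreducible_iff_prime.mp hp)⟩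

/-- If `R` is a unique factorization domain which is not the
two-element field `𝔽₂`, and `M` is a free `R`-module, then `M ↛ (1)_2^Span`: there is a
colouring `c : M → {0,1}` such that for no nonzero submodule `N ⊆ M` is `N \ {0}`
monochromatic. -/
theorem stmt_15 (R : Type*) [CommRing R] [IsDomain R] [UniqueFactorizationMonoid R]
    (hR : ¬ Nonempty (R ≃+* ZMod 2))
    (M : Type*) [AddCommGroup M] [Module R M] [Module.Free R M] :
    ∃ c : M → Fin 2, ∀ N : Submodule R M, N ≠ ⊥ →
      ¬ ∃ k, ∀ x ∈ N, x ≠ 0 → c x = k := by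
  obtain ⟨f, hf⟩ := exists_splitsLines_fin_two hR
  let _ : LinearOrder (Module.Free.ChooseBasisIndex R M) := IsWellOrder.linearOrder WellOrderingRel
  have hc := (Module.Free.chooseBasis R M).splitsLines_comp_leadingCoeff hf
  exact ⟨_, fun N hN => hc.not_exists_forall_eq hN⟩
end

section
/- Let G be an abelian group with no elements of order 2 (that is, x + x = 0 implies x = 0). Then there exists a colouring c : G → ℕ such that for no nontrivial subgroup H ⊆ G and no element a ∈ G is the coset a + H monochromatic for c. -/
/-!
Well-order `G`. For `a : G` let `satIio a` (resp. `satIic a`) consist of the `x` with some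
`2 ^ n • x` in the subgroup generated by the elements below (resp. at most) `a`, and let the
level of `x` be the least `a` with `x ∈ satIic a`. These subgroups are closed under halving, so the
level is ultrametric with `level (x + x) = level x`, and without `2`-torsion a nonzero `x` is never
in `satIio (level x)`. Modulo `satIio (level x)`, `x` is pinned down by a code `(n, m) : ℕ × ℤ` with
`2 ^ n • x - m • level x ∈ satIio (level x)`. Subtracting a canonical element of the same level and
code strictly lowers the level; the colour of `x` is the list of codes met along the way. If
`x + z = y + y` and the three share a colour, an isosceles argument shows their levels agree, so
their leading terms agree and induction gives `x = y`. Take `a + h, a, a - h`.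
-/

namespace CosetColouring

open Submodule Set

variable {G : Type*} [AddCommGroup G]

def twoSat (A : Submodule ℤ G) : Submodule ℤ G where
  carrier := {x | ∃ n : ℕ, (2 ^ n : ℤ) • x ∈ A}
  add_mem' := by
    rintro x y ⟨n, hn⟩ ⟨m, hm⟩
    refine ⟨n + m, ?_⟩
    rw [smul_add, pow_add, mul_comm, mul_smul, mul_comm, mul_smul]
    exact A.add_mem (A.smul_mem _ hn) (A.smul_mem _ hm)
  zero_mem' := ⟨0, by simp⟩
  smul_mem' := by
    rintro c x ⟨n, hn⟩
    exact ⟨n, by rw [smul_comm]; exact A.smul_mem c hn⟩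

lemma le_twoSat (A : Submodule ℤ G) : A ≤ twoSat A := fun x hx => ⟨0, by simpa using hx⟩

lemma twoSat_mono {A B : Submodule ℤ G} (h : A ≤ B) : twoSat A ≤ twoSat B := by
  rintro x ⟨n, hn⟩
  exact ⟨n, h hn⟩

lemma mem_twoSat_of_two_pow_smul_mem {A : Submodule ℤ G} {x : G} {n : ℕ}
    (h : (2 ^ n : ℤ) • x ∈ twoSat A) : x ∈ twoSat A := by
  obtain ⟨m, hm⟩ := h
  exact ⟨m + n, by rwa [pow_add, mul_smul]⟩

lemma add_self_mem_twoSat_iff {A : Submodule ℤ G} {x : G} : x + x ∈ twoSat A ↔ x ∈ twoSat A :=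
  ⟨fun h => mem_twoSat_of_two_pow_smul_mem (n := 1) (by rwa [pow_one, two_smul]),
    fun h => add_mem h h⟩

lemma eq_zero_of_two_pow_smul_eq_zero (h2 : ∀ x : G, x + x = 0 → x = 0) {x : G} {n : ℕ}
    (h : (2 ^ n : ℤ) • x = 0) : x = 0 := by
  induction n generalizing x with
  | zero => simpa using h
  | succ k ih => exact h2 x (ih (by rwa [← two_smul ℤ, ← mul_smul, ← pow_succ]))

noncomputable section Level

variable [LinearOrder G]

def satIio (a : G) : Submodule ℤ G := twoSat (span ℤ (Iio a))

def satIic (a : G) : Submodule ℤ G := twoSat (span ℤ (Iic a))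

lemma satIic_mono {a b : G} (h : a ≤ b) : satIic a ≤ satIic b :=
  twoSat_mono (span_mono (Iic_subset_Iic.mpr h))

lemma satIic_le_satIio {a b : G} (h : a < b) : satIic a ≤ satIio b :=
  twoSat_mono (span_mono (Iic_subset_Iio.mpr h))

lemma mem_satIic_self (a : G) : a ∈ satIic a := le_twoSat _ (subset_span (mem_Iic.mpr le_rfl))

variable [WellFoundedLT G]

def level (x : G) : G :=
  (wellFounded_lt (α := G)).min {a | x ∈ satIic a} ⟨x, mem_satIic_self x⟩

lemma mem_satIic_level (x : G) : x ∈ satIic (level x) :=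
  (wellFounded_lt (α := G)).min_mem {a | x ∈ satIic a} ⟨x, mem_satIic_self x⟩

lemma level_le_iff {x a : G} : level x ≤ a ↔ x ∈ satIic a :=
  ⟨fun h => satIic_mono h (mem_satIic_level x),
    fun h => not_lt.mp ((wellFounded_lt (α := G)).not_lt_min {a | x ∈ satIic a} h)⟩

lemma mem_satIio_of_level_lt {x a : G} (h : level x < a) : x ∈ satIio a :=
  satIic_le_satIio h (mem_satIic_level x)

lemma level_lt_of_mem_satIio (h2 : ∀ x : G, x + x = 0 → x = 0) {x a : G} (hx : x ≠ 0)
    (h : x ∈ satIio a) : level x < a := by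
  obtain ⟨n, hn⟩ := h
  obtain ⟨T, hTa, hT⟩ := mem_span_finite_of_mem_span hn
  rcases T.eq_empty_or_nonempty with rfl | hT_ne
  · rw [Finset.coe_empty, span_empty, mem_bot] at hT
    exact absurd (eq_zero_of_two_pow_smul_eq_zero h2 hT) hx
  · refine (level_le_iff.mpr ⟨n, span_mono ?_ hT⟩).trans_lt (hTa (T.max'_mem hT_ne))
    exact fun b hb => T.le_max' b hb

lemma level_add_le (x y : G) : level (x + y) ≤ max (level x) (level y) :=
  level_le_iff.mpr <| add_mem (satIic_mono (le_max_left _ _) (mem_satIic_level x))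
    (satIic_mono (le_max_right _ _) (mem_satIic_level y))

lemma level_sub_le (x y : G) : level (x - y) ≤ max (level x) (level y) :=
  level_le_iff.mpr <| sub_mem (satIic_mono (le_max_left _ _) (mem_satIic_level x))
    (satIic_mono (le_max_right _ _) (mem_satIic_level y))

lemma level_add_self (x : G) : level (x + x) = level x :=
  eq_of_forall_ge_iff fun _ => by rw [level_le_iff, level_le_iff, satIic, add_self_mem_twoSat_iff]

lemma exists_code (x : G) :
    ∃ p : ℕ × ℤ, (2 ^ p.1 : ℤ) • x - p.2 • level x ∈ satIio (level x) := by
  obtain ⟨n, hn⟩ := mem_satIic_level x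
  rw [← Iio_insert, span_insert, mem_sup] at hn
  obtain ⟨_, hw, y, hy, hwy⟩ := hn
  obtain ⟨m, rfl⟩ := mem_span_singleton.mp hw
  exact ⟨(n, m), by rw [← hwy, add_sub_cancel_left]; exact le_twoSat _ hy⟩

def code (x : G) : ℕ × ℤ := (exists_code x).choose

lemma code_spec (x : G) : (2 ^ (code x).1 : ℤ) • x - (code x).2 • level x ∈ satIio (level x) :=
  (exists_code x).choose_spec

lemma sub_mem_satIio_of_code_eq {x y : G} (hl : level x = level y) (hc : code x = code y) :
    x - y ∈ satIio (level x) := by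
  have hy := code_spec y
  rw [← hl, ← hc] at hy
  have h := sub_mem (code_spec x) hy
  rw [sub_sub_sub_cancel_right, ← smul_sub] at h
  exact mem_twoSat_of_two_pow_smul_mem h

def leading (x : G) : G := Function.invFun (fun u : G => (level u, code u)) (level x, code x)

lemma level_leading_code_leading (x : G) :
    (level (leading x), code (leading x)) = (level x, code x) :=
  Function.invFun_eq (f := fun u : G => (level u, code u)) ⟨x, rfl⟩

lemma sub_leading_mem_satIio (x : G) : x - leading x ∈ satIio (level x) := by
  obtain ⟨hl, hc⟩ := Prod.ext_iff.mp (level_leading_code_leading x)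
  exact sub_mem_satIio_of_code_eq hl.symm hc.symm

lemma leading_eq_leading {x y : G} (hl : level x = level y) (hc : code x = code y) :
    leading x = leading y := by
  rw [leading, leading, hl, hc]

lemma level_outer_le_level_middle (h2 : ∀ x : G, x + x = 0 → x = 0) {x y z : G}
    (hx : x ≠ 0) (h : x + z = y + y) (hl : level x = level z)
    (hc : code x = code z) : level x ≤ level y := by
  refine not_lt.mp fun hy => ?_
  have hsub : x - z ∈ satIio (level x) := sub_mem_satIio_of_code_eq hl hc
  have hadd : x + z ∈ satIio (level x) :=
    h ▸ mem_satIio_of_level_lt ((level_add_self y).trans_lt hy)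
  have hxx : x + x ∈ satIio (level x) := sub_add_add_cancel x x z ▸ add_mem hsub hadd
  exact (level_lt_of_mem_satIio h2 hx (add_self_mem_twoSat_iff.mp hxx)).false

lemma level_middle_le_level_outer (h2 : ∀ x : G, x + x = 0 → x = 0) {x y z : G}
    (hy : y ≠ 0) (h : x + z = y + y) (hl : level z = level y)
    (hc : code z = code y) : level y ≤ level x := by
  refine not_lt.mp fun hx => ?_
  have hsub : z - y ∈ satIio (level y) := hl ▸ sub_mem_satIio_of_code_eq hl hc
  have hy' : x + (z - y) = y := by rw [← add_sub_assoc, h, add_sub_cancel_right]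
  have hmem := add_mem (mem_satIio_of_level_lt hx) hsub
  rw [hy'] at hmem
  exact (level_lt_of_mem_satIio h2 hy hmem).false

lemma level_eq_of_add_eq_add_self (h2 : ∀ x : G, x + x = 0 → x = 0) {x y z : G}
    (hx : x ≠ 0) (hy : y ≠ 0) (hcx : code x = code y) (hcz : code z = code y) (h : x + z = y + y) :
    level x = level y ∧ level z = level y := by
  have h' : z + x = y + y := (add_comm z x).trans h
  have hy_le : level y ≤ max (level x) (level z) := level_add_self y ▸ h ▸ level_add_le x z
  have hx_le := level_sub_le (y + y) z
  rw [level_add_self, ← h, add_sub_cancel_right] at hx_le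
  have hz_le := level_sub_le (y + y) x
  rw [level_add_self, ← h', add_sub_cancel_right] at hz_le
  -- The largest level is attained at least twice, and the two lemmas above rule out exactly twice.
  have hxz := fun hl => level_outer_le_level_middle h2 hx h hl (hcx.trans hcz.symm)
  have hzy := fun hl => level_middle_le_level_outer h2 hy h hl hcz
  have hxy := fun hl => level_middle_le_level_outer h2 hy h' hl hcx
  rw [le_max_iff] at hy_le hx_le hz_le
  grind

-- `level 0` is the least element of `G`, which may also be the level of a nonzero element.
def height (x : G) : WithBot G := if x = 0 then ⊥ else ((level x : G) : WithBot G)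

lemma height_sub_leading_lt (h2 : ∀ x : G, x + x = 0 → x = 0) {x : G} (hx : x ≠ 0) :
    height (x - leading x) < height x := by
  rw [height, height, if_neg hx]
  split_ifs with h
  · exact WithBot.bot_lt_coe _
  · exact WithBot.coe_lt_coe.mpr (level_lt_of_mem_satIio h2 h (sub_leading_mem_satIio x))

attribute [local instance] WellFoundedLT.toWellFoundedRelation in
def colour (h2 : ∀ x : G, x + x = 0 → x = 0) (x : G) : List (ℕ × ℤ) :=
  if _ : x = 0 then [] else colour h2 (x - leading x) ++ [code x]
termination_by height x
decreasing_by exact height_sub_leading_lt h2 ‹_›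

variable (h2 : ∀ x : G, x + x = 0 → x = 0)

lemma colour_zero : colour h2 (0 : G) = [] := by
  rw [colour, dif_pos rfl]

lemma colour_of_ne_zero {x : G} (hx : x ≠ 0) :
    colour h2 x = colour h2 (x - leading x) ++ [code x] := by
  rw [colour, dif_neg hx]

lemma eq_zero_of_colour_eq_nil {x : G} (h : colour h2 x = []) : x = 0 := by
  by_contra hx
  simp [colour_of_ne_zero h2 hx] at h

lemma of_colour_eq_concat {x : G} {L : List (ℕ × ℤ)} {e : ℕ × ℤ} (h : colour h2 x = L ++ [e]) :
    x ≠ 0 ∧ colour h2 (x - leading x) = L ∧ code x = e := by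
  have hx : x ≠ 0 := by
    rintro rfl
    simp [colour_zero] at h
  rw [colour_of_ne_zero h2 hx] at h
  simpa [hx] using h

theorem eq_of_colour_eq_of_add_eq_add_self {x y z : G} (h : x + z = y + y)
    (hx : colour h2 x = colour h2 y) (hz : colour h2 z = colour h2 y) : x = y := by
  induction hL : colour h2 y using List.reverseRecOn generalizing x y z with
  | nil =>
    rw [eq_zero_of_colour_eq_nil h2 hL, eq_zero_of_colour_eq_nil h2 (hx.trans hL)]
  | append_singleton L e ih =>
    obtain ⟨hx0, hxL, hxe⟩ := of_colour_eq_concat h2 (hx.trans hL)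
    obtain ⟨hy0, hyL, hye⟩ := of_colour_eq_concat h2 hL
    obtain ⟨-, hzL, hze⟩ := of_colour_eq_concat h2 (hz.trans hL)
    obtain ⟨hlx, hlz⟩ :=
      level_eq_of_add_eq_add_self h2 hx0 hy0 (hxe.trans hye.symm) (hze.trans hye.symm) h
    rw [leading_eq_leading hlx (hxe.trans hye.symm)] at hxL
    rw [leading_eq_leading hlz (hze.trans hye.symm)] at hzL
    have h' : (x - leading y) + (z - leading y) = (y - leading y) + (y - leading y) := by
      rw [sub_add_sub_comm, h, sub_add_sub_comm]
    exact sub_left_injective (ih h' (hxL.trans hyL.symm) (hzL.trans hyL.symm) hyL)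

end Level

end CosetColouring

open CosetColouring

/-- If `G` is an abelian group with no elements of order `2`, then
there is a colouring `c : G → ℕ` such that for no nontrivial subgroup `H ⊆ G` and no
`a ∈ G` is the coset `a + H` monochromatic. -/
theorem stmt_16 (G : Type*) [AddCommGroup G] (h2 : ∀ x : G, x + x = 0 → x = 0) :
    ∃ c : G → ℕ, ∀ H : AddSubgroup G, H ≠ ⊥ → ∀ a : G,
      ¬ ∃ k, ∀ h ∈ H, c (a + h) = k := by
  let _ : LinearOrder G := IsWellOrder.linearOrder WellOrderingRel
  have _ : WellFoundedLT G := inferInstanceAs (IsWellFounded G WellOrderingRel)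
  refine ⟨fun g => Encodable.encode (colour h2 g), fun H hH a ⟨k, hk⟩ => ?_⟩
  obtain ⟨⟨h, hh⟩, hh0⟩ := (AddSubgroup.ne_bot_iff_exists_ne_zero).mp hH
  have colour_eq {g : G} (hg : g ∈ H) :
      colour h2 (a + g) = colour h2 a :=
    Encodable.encode_injective <| by simpa using (hk g hg).trans (hk 0 H.zero_mem).symm
  have hah := eq_of_colour_eq_of_add_eq_add_self h2
    (by abel : (a + h) + (a + -h) = a + a) (colour_eq hh) (colour_eq (H.neg_mem hh))
  exact hh0 (by simpa using hah)
end
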